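/- arXiv:q-alg/9708023 — 3 statements merged into one kernel-verified Lean document; each statement's English description precedes it below -/
import Mathlib

section
/- Let (G,Δ,ε,φ,S,α,β) be a finite-dimensional quasi-Hopf algebra over a field k with invertible antipode S, and let R ∈ G⊗G be quasitriangular. Writing φ = Xʲ⊗Yʲ⊗Zʲ and φ⁻¹ = Pⁱ⊗Qⁱ⊗Rⁱ (implicit summation) and q_ρ := Xⁱ ⊗ S⁻¹(α·Zⁱ)·Yⁱ, one has R⁻¹ = [Xʲ·β·S(Pⁱ·Yʲ) ⊗ 1] · (S⊗id)(q_ρᵒᵖ·R) · [(Rⁱ⊗Qⁱ)·Δᵒᵖ(Zʲ)], where q_ρᵒᵖ denotes q_ρ with its two tensor legs interchanged and Δᵒᵖ := τ∘Δ is the opposite coproduct. -/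
open TensorProduct

set_option maxSynthPendingDepth 8
set_option synthInstance.maxHeartbeats 1000000
set_option maxHeartbeats 1000000

noncomputable section

namespace QHA

variable (k G : Type) [Field k] [Ring G] [Algebra k G]

/-- The data of a (finite-dimensional) quasi-Hopf algebra: coproduct, counit,
reassociator (together with its inverse), antipode (as an invertible linear map)
and the elements `α`, `β`. -/
structure QuasiHopfData : Type where
  Δ : G →ₐ[k] G ⊗[k] G
  ε : G →ₐ[k] k
  φ : G ⊗[k] (G ⊗[k] G)
  φ' : G ⊗[k] (G ⊗[k] G)
  S : G ≃ₗ[k] G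
  α : G
  β : G

/-- Swap of legs 2 and 3 of the triple tensor product. -/
def c23 : G ⊗[k] (G ⊗[k] G) →ₐ[k] G ⊗[k] (G ⊗[k] G) :=
  Algebra.TensorProduct.map (AlgHom.id k G) (Algebra.TensorProduct.comm k G G).toAlgHom

/-- Swap of legs 1 and 2 of the triple tensor product. -/
def c12 : G ⊗[k] (G ⊗[k] G) →ₐ[k] G ⊗[k] (G ⊗[k] G) :=
  ((Algebra.TensorProduct.assoc k k k G G G).toAlgHom.comp
    (Algebra.TensorProduct.map (Algebra.TensorProduct.comm k G G).toAlgHom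
      (AlgHom.id k G))).comp
    (Algebra.TensorProduct.assoc k k k G G G).symm.toAlgHom

/-- Place an element of `G ⊗ G` in legs 1,2 of `G ⊗ G ⊗ G`. -/
def e12 : G ⊗[k] G →ₐ[k] G ⊗[k] (G ⊗[k] G) :=
  Algebra.TensorProduct.map (AlgHom.id k G) Algebra.TensorProduct.includeLeft

/-- Place an element of `G ⊗ G` in legs 1,3 of `G ⊗ G ⊗ G`. -/
def e13 : G ⊗[k] G →ₐ[k] G ⊗[k] (G ⊗[k] G) :=
  Algebra.TensorProduct.map (AlgHom.id k G) Algebra.TensorProduct.includeRight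

/-- Place an element of `G ⊗ G` in legs 2,3 of `G ⊗ G ⊗ G`. -/
def e23 : G ⊗[k] G →ₐ[k] G ⊗[k] (G ⊗[k] G) :=
  Algebra.TensorProduct.includeRight

/-- `ψ ⊗ 1`, an element of `G ⊗ G ⊗ G` placed in legs 1,2,3 of the 4-fold
tensor product. -/
def padR (ψ : G ⊗[k] (G ⊗[k] G)) : G ⊗[k] (G ⊗[k] (G ⊗[k] G)) :=
  (Algebra.TensorProduct.map (AlgHom.id k G) (Algebra.TensorProduct.assoc k k k G G G).toAlgHom)
    ((Algebra.TensorProduct.assoc k k k G (G ⊗[k] G) G) (ψ ⊗ₜ[k] (1:G)))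

/-- The product on the tensor product of two (not necessarily unital/associative)
algebras given by bilinear multiplications `mV`, `mW`. -/
def mulTens {V W : Type} [AddCommGroup V] [Module k V] [AddCommGroup W] [Module k W]
    (mV : V →ₗ[k] V →ₗ[k] V) (mW : W →ₗ[k] W →ₗ[k] W) :
    (V ⊗[k] W) →ₗ[k] (V ⊗[k] W) →ₗ[k] (V ⊗[k] W) :=
  TensorProduct.curry ((TensorProduct.map (TensorProduct.lift mV) (TensorProduct.lift mW)) ∘ₗ
    (TensorProduct.tensorTensorTensorComm k V W V W).toLinearMap)

/-- The functional `x ↦ χ (d * x * c)`; this is `c ⇀ χ ↼ d` in Hopf algebra notation. -/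
def shiftF (c d : G) (χ : Module.Dual k G) : Module.Dual k G :=
  χ ∘ₗ (LinearMap.mulLeft k d) ∘ₗ (LinearMap.mulRight k c)

namespace QuasiHopfData

variable {k G}
variable (H : QuasiHopfData k G)

/-- The opposite coproduct `Δᵒᵖ = τ ∘ Δ`. -/
def Δop : G →ₐ[k] G ⊗[k] G := (Algebra.TensorProduct.comm k G G).toAlgHom.comp H.Δ

/-- `(id ⊗ Δ) ∘ Δ`. -/
def ΔR : G →ₐ[k] G ⊗[k] (G ⊗[k] G) :=
  (Algebra.TensorProduct.map (AlgHom.id k G) H.Δ).comp H.Δ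

/-- `(Δ ⊗ id) ∘ Δ` (reassociated); this is the two-sided coaction `δ`. -/
def ΔL : G →ₐ[k] G ⊗[k] (G ⊗[k] G) :=
  ((Algebra.TensorProduct.assoc k k k G G G).toAlgHom.comp
    (Algebra.TensorProduct.map H.Δ (AlgHom.id k G))).comp H.Δ

/-- `id ⊗ id ⊗ Δ` on the triple tensor product. -/
def ooΔ : G ⊗[k] (G ⊗[k] G) →ₐ[k] G ⊗[k] (G ⊗[k] (G ⊗[k] G)) :=
  Algebra.TensorProduct.map (AlgHom.id k G) (Algebra.TensorProduct.map (AlgHom.id k G) H.Δ)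

/-- `Δ ⊗ id ⊗ id` on the triple tensor product. -/
def Δoo : G ⊗[k] (G ⊗[k] G) →ₐ[k] G ⊗[k] (G ⊗[k] (G ⊗[k] G)) :=
  (Algebra.TensorProduct.assoc k k k G G (G ⊗[k] G)).toAlgHom.comp
    (Algebra.TensorProduct.map H.Δ (AlgHom.id k (G ⊗[k] G)))

/-- `id ⊗ Δ ⊗ id` on the triple tensor product. -/
def oΔo : G ⊗[k] (G ⊗[k] G) →ₐ[k] G ⊗[k] (G ⊗[k] (G ⊗[k] G)) :=
  (Algebra.TensorProduct.map (AlgHom.id k G)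
      (Algebra.TensorProduct.assoc k k k G G G).toAlgHom).comp
    (Algebra.TensorProduct.map (AlgHom.id k G)
      (Algebra.TensorProduct.map H.Δ (AlgHom.id k G)))

/-- Contraction of the first tensor leg with the counit. -/
def κ1 (M : Type) [Ring M] [Algebra k M] : G ⊗[k] M →ₐ[k] M :=
  (Algebra.TensorProduct.lid k M).toAlgHom.comp
    (Algebra.TensorProduct.map H.ε (AlgHom.id k M))

/-- Contraction of the last tensor leg with the counit. -/
def κ2 (M : Type) [Ring M] [Algebra k M] : M ⊗[k] G →ₐ[k] M :=
  (Algebra.TensorProduct.rid k k M).toAlgHom.comp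
    (Algebra.TensorProduct.map (AlgHom.id k M) H.ε)

/-- The multiplication on the dual space `Ĝ`, `⟨χξ, a⟩ = ⟨χ ⊗ ξ, Δ(a)⟩`. -/
def dmul (χ ξ : Module.Dual k G) : Module.Dual k G :=
  ((LinearMap.mul' k k) ∘ₗ (TensorProduct.map χ ξ)) ∘ₗ H.Δ.toLinearMap

/-- The axioms of a quasi-Hopf algebra for the data `H`. -/
structure IsQuasiHopf : Prop where
  S_mul : ∀ a b : G, H.S (a * b) = H.S b * H.S a
  S_one : H.S 1 = 1
  φ_mul_inv : H.φ * H.φ' = 1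
  φ_inv_mul : H.φ' * H.φ = 1
  Δ_assoc : ∀ a : G, H.ΔR a * H.φ = H.φ * H.ΔL a
  pentagon : H.ooΔ H.φ * H.Δoo H.φ =
    ((1:G) ⊗ₜ[k] H.φ) * H.oΔo H.φ * QHA.padR k G H.φ
  counit_left : ∀ a : G, H.κ1 G (H.Δ a) = a
  counit_right : ∀ a : G, H.κ2 G (H.Δ a) = a
  counit_mid : (Algebra.TensorProduct.map (AlgHom.id k G) (H.κ1 G)) H.φ = 1
  antipode_left : ∀ a : G,
    (LinearMap.mul' k G) (TensorProduct.map
      ((LinearMap.mulRight k H.α) ∘ₗ H.S.toLinearMap) LinearMap.id (H.Δ a)) = H.ε a • H.α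
  antipode_right : ∀ a : G,
    (LinearMap.mul' k G) (TensorProduct.map
      (LinearMap.mulRight k H.β) H.S.toLinearMap (H.Δ a)) = H.ε a • H.β
  antipode_φ :
    (LinearMap.mul' k G) (TensorProduct.map (LinearMap.mulRight k H.β)
      ((LinearMap.mul' k G) ∘ₗ (TensorProduct.map
        ((LinearMap.mulRight k H.α) ∘ₗ H.S.toLinearMap) LinearMap.id)) H.φ) = 1
  antipode_φ' :
    (LinearMap.mul' k G) (TensorProduct.map
      ((LinearMap.mulRight k H.α) ∘ₗ H.S.toLinearMap)
      ((LinearMap.mul' k G) ∘ₗ (TensorProduct.map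
        (LinearMap.mulRight k H.β) H.S.toLinearMap)) H.φ') = 1

/-- Quasitriangularity of an element `R` (with specified two-sided inverse `Rinv`)
for the quasi-Hopf algebra `H`:  the intertwining property and the two hexagon
relations, with the leg-numbering conventions of the paper. -/
structure IsQT (R Rinv : G ⊗[k] G) : Prop where
  mul_inv : R * Rinv = 1
  inv_mul : Rinv * R = 1
  intertwine : ∀ a : G, H.Δop a * R = R * H.Δ a
  hexagon1 : (Algebra.TensorProduct.assoc k k k G G G)
      ((Algebra.TensorProduct.map H.Δ (AlgHom.id k G)) R)
    = QHA.c23 k G (QHA.c12 k G H.φ) * QHA.e13 k G R * QHA.c23 k G H.φ' *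
      QHA.e23 k G R * H.φ
  hexagon2 : (Algebra.TensorProduct.map (AlgHom.id k G) H.Δ) R
    = QHA.c12 k G (QHA.c23 k G H.φ') * QHA.e13 k G R * QHA.c12 k G H.φ *
      QHA.e12 k G R * H.φ'

end QuasiHopfData

end QHA

/-!
Write `s ◁ (a ⊗ t) = (S a ⊗ 1) s t`: a right action of `G ⊗ G ⊗ G` on `G ⊗ G`, because `S` is
an antihomomorphism. Let `σ(x ⊗ y ⊗ z) = y ⊗ z ⊗ x` and `s = (α ⊗ 1) ◁ σ(φ)`. Then
`(S ⊗ id)(q_ρᵒᵖ w) = s ◁ w₁₃`, so the right-hand side `E` of the formula equals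
`∑ⱼ (Xʲ β S(Yʲ) ⊗ 1) (s ◁ R₁₃ φ⁻¹₁₃₂) Δᵒᵖ(Zʲ)`. Multiplying by `R` on the right and using
`Δᵒᵖ(a) R = R Δ(a)`, the middle factor becomes `s ◁ R₁₃ φ⁻¹₁₃₂ R₂₃`, which by the first hexagon
is `s ◁ σ(φ⁻¹) (Δ ⊗ id)(R) φ⁻¹`. Now `s ◁ σ(φ⁻¹) = (α ⊗ 1) ◁ σ(φ φ⁻¹) = α ⊗ 1` and
`(α ⊗ 1) ◁ (Δ ⊗ id)(R) = α ⊗ (ε ⊗ id)(R) = α ⊗ 1`, so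
`E R = ∑ⱼ (Xʲ β S(Yʲ) ⊗ 1) ((α ⊗ 1) ◁ φ⁻¹) Δ(Zʲ)`. This is the image of
`(1 ⊗ φ⁻¹)(id ⊗ id ⊗ Δ)(φ)` under `a ⊗ b ⊗ c ⊗ d ↦ a β S(b) α c ⊗ d`, which the pentagon and the
antipode axioms evaluate to `1`. Hence `E` is a left inverse of `R`, so `E = R⁻¹`.
The counit identities `(ε ⊗ id ⊗ id)(φ) = 1` and `(ε ⊗ id)(R) = 1` needed on the way come from
contracting legs of the pentagon and of the hexagon with `ε`.
-/

theorem TensorProduct.induction_on₃ {R M N P : Type*} [CommSemiring R]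
    [AddCommMonoid M] [AddCommMonoid N] [AddCommMonoid P] [Module R M] [Module R N] [Module R P]
    {motive : M ⊗[R] (N ⊗[R] P) → Prop} (w : M ⊗[R] (N ⊗[R] P)) (zero : motive 0)
    (tmul : ∀ a b c, motive (a ⊗ₜ (b ⊗ₜ c))) (add : ∀ x y, motive x → motive y → motive (x + y)) :
    motive w := by
  induction w using TensorProduct.induction_on with
  | zero => exact zero
  | tmul a t =>
    induction t using TensorProduct.induction_on with
    | zero => simpa using zero
    | tmul b c => exact tmul a b c
    | add t u ht hu => simpa [tmul_add] using add _ _ ht hu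
  | add x y hx hy => exact add x y hx hy

namespace QHA

open Algebra.TensorProduct (tmul_mul_tmul)

variable {k G : Type} [Field k] [Ring G] [Algebra k G]

@[simp] lemma c23_tmul (a b c : G) : c23 k G (a ⊗ₜ[k] (b ⊗ₜ[k] c)) = a ⊗ₜ (c ⊗ₜ b) := by
  simp [c23]

@[simp] lemma c12_tmul (a b c : G) : c12 k G (a ⊗ₜ[k] (b ⊗ₜ[k] c)) = b ⊗ₜ (a ⊗ₜ c) := by
  simp [c12]

@[simp] lemma e13_tmul (a b : G) : e13 k G (a ⊗ₜ[k] b) = a ⊗ₜ ((1 : G) ⊗ₜ b) := by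
  simp [e13]

@[simp] lemma e23_apply (w : G ⊗[k] G) : e23 k G w = (1 : G) ⊗ₜ w := by
  simp [e23]

@[simp] lemma padR_tmul (a b c : G) :
    padR k G (a ⊗ₜ[k] (b ⊗ₜ[k] c)) = a ⊗ₜ (b ⊗ₜ (c ⊗ₜ (1 : G))) := by
  simp [padR]

@[simp] lemma padR_zero : padR k G 0 = 0 := by
  simp [padR]

@[simp] lemma padR_add (ψ χ : G ⊗[k] (G ⊗[k] G)) : padR k G (ψ + χ) = padR k G ψ + padR k G χ := by
  simp [padR, add_tmul]

namespace QuasiHopfData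

variable (H : QuasiHopfData k G)

@[simp] lemma κ1_tmul {M : Type} [Ring M] [Algebra k M] (a : G) (m : M) :
    H.κ1 M (a ⊗ₜ m) = H.ε a • m := by
  simp [κ1]

@[simp] lemma ooΔ_tmul (a b c : G) : H.ooΔ (a ⊗ₜ (b ⊗ₜ c)) = a ⊗ₜ (b ⊗ₜ H.Δ c) := by
  simp [ooΔ]

@[simp] lemma Δoo_tmul (a : G) (w : G ⊗[k] G) :
    H.Δoo (a ⊗ₜ w) = Algebra.TensorProduct.assoc k k k G G (G ⊗[k] G) (H.Δ a ⊗ₜ w) := by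
  simp [Δoo]

@[simp] lemma oΔo_tmul (a b c : G) :
    H.oΔo (a ⊗ₜ (b ⊗ₜ c)) = a ⊗ₜ Algebra.TensorProduct.assoc k k k G G G (H.Δ b ⊗ₜ c) := by
  simp [oΔo]

def antipodeLeft : G ⊗[k] G →ₗ[k] G :=
  LinearMap.mul' k G ∘ₗ map (LinearMap.mulRight k H.α ∘ₗ H.S.toLinearMap) LinearMap.id

def antipodeRight : G ⊗[k] G →ₗ[k] G :=
  LinearMap.mul' k G ∘ₗ map (LinearMap.mulRight k H.β) H.S.toLinearMap

@[simp] lemma antipodeLeft_tmul (x y : G) : H.antipodeLeft (x ⊗ₜ y) = H.S x * H.α * y := by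
  simp [antipodeLeft]

@[simp] lemma antipodeRight_tmul (x y : G) : H.antipodeRight (x ⊗ₜ y) = x * H.β * H.S y := by
  simp [antipodeRight]

def act (s : G ⊗[k] G) : G ⊗[k] (G ⊗[k] G) →ₗ[k] G ⊗[k] G :=
  lift (LinearMap.mul k (G ⊗[k] G) ∘ₗ LinearMap.mulRight k s ∘ₗ
    Algebra.TensorProduct.includeLeft.toLinearMap ∘ₗ H.S.toLinearMap)

@[simp] lemma act_tmul (s t : G ⊗[k] G) (a : G) :
    H.act s (a ⊗ₜ t) = (H.S a ⊗ₜ (1 : G)) * s * t := by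
  simp [act]

/-- `a ⊗ b ⊗ c ⊗ d ↦ a β S(b) α c ⊗ d`. -/
def antipodeContract : G ⊗[k] (G ⊗[k] (G ⊗[k] G)) →ₗ[k] G ⊗[k] G :=
  LinearMap.mul' k (G ⊗[k] G) ∘ₗ
    map (Algebra.TensorProduct.includeLeft.toLinearMap ∘ₗ LinearMap.mulRight k H.β)
      (H.act (H.α ⊗ₜ 1))

@[simp] lemma antipodeContract_tmul (x : G) (ψ : G ⊗[k] (G ⊗[k] G)) :
    H.antipodeContract (x ⊗ₜ ψ) = ((x * H.β) ⊗ₜ (1 : G)) * H.act (H.α ⊗ₜ 1) ψ := by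
  simp [antipodeContract]

variable {H}

lemma IsQuasiHopf.antipodeLeft_Δ (hH : H.IsQuasiHopf) (a : G) :
    H.antipodeLeft (H.Δ a) = H.ε a • H.α :=
  hH.antipode_left a

lemma IsQuasiHopf.antipodeRight_Δ (hH : H.IsQuasiHopf) (a : G) :
    H.antipodeRight (H.Δ a) = H.ε a • H.β :=
  hH.antipode_right a

lemma act_one (hH : H.IsQuasiHopf) (s : G ⊗[k] G) : H.act s 1 = s := by
  rw [Algebra.TensorProduct.one_def, act_tmul, hH.S_one, ← Algebra.TensorProduct.one_def, one_mul,
    mul_one]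

lemma act_mul (hH : H.IsQuasiHopf) (s : G ⊗[k] G) (ψ w : G ⊗[k] (G ⊗[k] G)) :
    H.act s (ψ * w) = H.act (H.act s ψ) w := by
  induction w using TensorProduct.induction_on with
  | zero => simp
  | tmul a t =>
    induction ψ using TensorProduct.induction_on with
    | zero => simp
    | tmul b u =>
      simp only [tmul_mul_tmul, act_tmul, hH.S_mul, mul_assoc]
      simp only [← mul_assoc, tmul_mul_tmul, mul_one]
    | add ψ χ hψ hχ => simp only [add_mul, map_add, hψ, hχ, act_tmul, mul_add]
  | add w v hw hv => simp only [mul_add, map_add, hw, hv]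

lemma act_e23 (hH : H.IsQuasiHopf) (s t : G ⊗[k] G) : H.act s (e23 k G t) = s * t := by
  simp [hH.S_one, ← Algebra.TensorProduct.one_def]

lemma act_tmul_right (x c : G) (w : G ⊗[k] (G ⊗[k] G)) :
    H.act (x ⊗ₜ c) w = ((1 : G) ⊗ₜ c) * H.act (x ⊗ₜ 1) w := by
  induction w using TensorProduct.induction_on with
  | zero => simp
  | tmul a t =>
    simp only [act_tmul, ← mul_assoc, tmul_mul_tmul, one_mul, mul_one]
  | add w v hw hv => simp only [map_add, hw, hv, mul_add]

lemma map_S_mul (hH : H.IsQuasiHopf) (q w : G ⊗[k] G) :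
    map H.S.toLinearMap LinearMap.id (q * w) =
      H.act (map H.S.toLinearMap LinearMap.id q) (e13 k G w) := by
  induction w using TensorProduct.induction_on with
  | zero => simp
  | tmul a b =>
    induction q using TensorProduct.induction_on with
    | zero => simp
    | tmul x y =>
      simp [tmul_mul_tmul, hH.S_mul]
    | add q r hq hr => simp only [add_mul, map_add, hq, hr, e13_tmul, act_tmul, mul_add]
  | add w v hw hv => simp only [mul_add, map_add, hw, hv]

lemma act_assoc_tmul (q : G ⊗[k] G) (c : G) :
    H.act (H.α ⊗ₜ 1) (Algebra.TensorProduct.assoc k k k G G G (q ⊗ₜ c)) =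
      H.antipodeLeft q ⊗ₜ c := by
  induction q using TensorProduct.induction_on with
  | zero => simp
  | tmul x y => simp [tmul_mul_tmul]
  | add q r hq hr => simp only [add_tmul, map_add, hq, hr]

lemma act_assoc_map_Δ (hH : H.IsQuasiHopf) (t : G ⊗[k] G) :
    H.act (H.α ⊗ₜ 1) (Algebra.TensorProduct.assoc k k k G G G
      (Algebra.TensorProduct.map H.Δ (AlgHom.id k G) t)) = H.α ⊗ₜ H.κ1 G t := by
  induction t using TensorProduct.induction_on with
  | zero => simp
  | tmul x y =>
    rw [Algebra.TensorProduct.map_tmul, act_assoc_tmul, hH.antipodeLeft_Δ, AlgHom.id_apply,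
      κ1_tmul, smul_tmul]
  | add t u ht hu => simp only [map_add, ht, hu, tmul_add]

lemma κ1_assoc_tmul (q : G ⊗[k] G) (c : G) :
    H.κ1 (G ⊗[k] G) (Algebra.TensorProduct.assoc k k k G G G (q ⊗ₜ c)) = H.κ1 G q ⊗ₜ c := by
  induction q using TensorProduct.induction_on with
  | zero => simp
  | tmul x y => simp [smul_tmul']
  | add q r hq hr => simp only [add_tmul, map_add, hq, hr]

lemma κ1_assoc_map_Δ (hH : H.IsQuasiHopf) (t : G ⊗[k] G) :
    H.κ1 (G ⊗[k] G) (Algebra.TensorProduct.assoc k k k G G G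
      (Algebra.TensorProduct.map H.Δ (AlgHom.id k G) t)) = t := by
  induction t using TensorProduct.induction_on with
  | zero => simp
  | tmul x y =>
    rw [Algebra.TensorProduct.map_tmul, κ1_assoc_tmul, hH.counit_left, AlgHom.id_apply]
  | add t u ht hu => simp only [map_add, ht, hu]

lemma κ1_κ1_ooΔ (ψ : G ⊗[k] (G ⊗[k] G)) :
    H.κ1 (G ⊗[k] G) (H.κ1 (G ⊗[k] (G ⊗[k] G)) (H.ooΔ ψ)) =
      H.Δ (H.κ1 G (H.κ1 (G ⊗[k] G) ψ)) := by
  induction ψ using TensorProduct.induction_on₃ with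
  | zero => simp
  | tmul a b c => simp [smul_smul]
  | add x y hx hy => simp only [map_add, hx, hy]

lemma κ1_κ1_Δoo (hH : H.IsQuasiHopf) (ψ : G ⊗[k] (G ⊗[k] G)) :
    H.κ1 (G ⊗[k] G) (H.κ1 (G ⊗[k] (G ⊗[k] G)) (H.Δoo ψ)) = H.κ1 (G ⊗[k] G) ψ := by
  have hκκ : ∀ q w : G ⊗[k] G, H.κ1 (G ⊗[k] G) (H.κ1 (G ⊗[k] (G ⊗[k] G))
      (Algebra.TensorProduct.assoc k k k G G (G ⊗[k] G) (q ⊗ₜ w))) = H.ε (H.κ1 G q) • w := by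
    intro q w
    induction q using TensorProduct.induction_on with
    | zero => simp
    | tmul x y => simp [smul_smul]
    | add q r hq hr => simp only [add_tmul, map_add, hq, hr, add_smul]
  induction ψ using TensorProduct.induction_on with
  | zero => simp
  | tmul a w => rw [Δoo_tmul, hκκ, hH.counit_left, κ1_tmul]
  | add x y hx hy => simp only [map_add, hx, hy]

lemma κ1_κ1_oΔo (hH : H.IsQuasiHopf) (ψ : G ⊗[k] (G ⊗[k] G)) :
    H.κ1 (G ⊗[k] G) (H.κ1 (G ⊗[k] (G ⊗[k] G)) (H.oΔo ψ)) = H.κ1 (G ⊗[k] G) ψ := by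
  induction ψ using TensorProduct.induction_on₃ with
  | zero => simp
  | tmul a b c => simp [κ1_assoc_tmul, hH.counit_left]
  | add x y hx hy => simp only [map_add, hx, hy]

lemma κ1_κ1_padR (ψ : G ⊗[k] (G ⊗[k] G)) :
    H.κ1 (G ⊗[k] G) (H.κ1 (G ⊗[k] (G ⊗[k] G)) (padR k G ψ)) =
      H.κ1 G (H.κ1 (G ⊗[k] G) ψ) ⊗ₜ 1 := by
  induction ψ using TensorProduct.induction_on₃ with
  | zero => simp
  | tmul a b c => simp [smul_tmul']
  | add x y hx hy => simp only [padR_add, map_add, hx, hy, add_tmul]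

lemma κ1_κ1_eq_κ1_map_κ1 (ψ : G ⊗[k] (G ⊗[k] G)) :
    H.κ1 G (H.κ1 (G ⊗[k] G) ψ) =
      H.κ1 G (Algebra.TensorProduct.map (AlgHom.id k G) (H.κ1 G) ψ) := by
  induction ψ using TensorProduct.induction_on₃ with
  | zero => simp
  | tmul a b c => simp [smul_smul, mul_comm]
  | add x y hx hy => simp only [map_add, hx, hy]

/-- Contracting the first two legs of the pentagon shows that `(ε ⊗ id ⊗ id) φ` is idempotent. -/
theorem IsQuasiHopf.κ1_φ (hH : H.IsQuasiHopf) : H.κ1 (G ⊗[k] G) H.φ = 1 := by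
  have hεε : H.κ1 G (H.κ1 (G ⊗[k] G) H.φ) = 1 := by
    rw [κ1_κ1_eq_κ1_map_κ1, hH.counit_mid, map_one]
  have hidem := congrArg (fun x => H.κ1 (G ⊗[k] G) (H.κ1 (G ⊗[k] (G ⊗[k] G)) x)) hH.pentagon
  simp only [map_mul, κ1_κ1_ooΔ, κ1_κ1_Δoo hH, κ1_κ1_oΔo hH, κ1_κ1_padR, hεε, map_one,
    κ1_tmul, one_smul, ← Algebra.TensorProduct.one_def, one_mul, mul_one] at hidem
  calc H.κ1 (G ⊗[k] G) H.φ
      = H.κ1 (G ⊗[k] G) H.φ * (H.κ1 (G ⊗[k] G) H.φ * H.κ1 (G ⊗[k] G) H.φ') := by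
        rw [← map_mul, hH.φ_mul_inv, map_one, mul_one]
    _ = 1 := by rw [← mul_assoc, ← hidem, ← map_mul, hH.φ_mul_inv, map_one]

theorem IsQuasiHopf.κ1_φ' (hH : H.IsQuasiHopf) : H.κ1 (G ⊗[k] G) H.φ' = 1 := by
  simpa [hH.κ1_φ] using congrArg (H.κ1 (G ⊗[k] G)) hH.φ_mul_inv

lemma κ1_c23 (ψ : G ⊗[k] (G ⊗[k] G)) :
    H.κ1 (G ⊗[k] G) (c23 k G ψ) = Algebra.TensorProduct.comm k G G (H.κ1 (G ⊗[k] G) ψ) := by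
  induction ψ using TensorProduct.induction_on₃ with
  | zero => simp
  | tmul a b c => simp
  | add x y hx hy => simp only [map_add, hx, hy]

lemma κ1_c12 (ψ : G ⊗[k] (G ⊗[k] G)) :
    H.κ1 (G ⊗[k] G) (c12 k G ψ) = Algebra.TensorProduct.map (AlgHom.id k G) (H.κ1 G) ψ := by
  induction ψ using TensorProduct.induction_on₃ with
  | zero => simp
  | tmul a b c => simp [smul_tmul']
  | add x y hx hy => simp only [map_add, hx, hy]

lemma κ1_e13 (w : G ⊗[k] G) : H.κ1 (G ⊗[k] G) (e13 k G w) = (1 : G) ⊗ₜ H.κ1 G w := by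
  induction w using TensorProduct.induction_on with
  | zero => simp
  | tmul a b => simp
  | add x y hx hy => simp only [map_add, hx, hy, tmul_add]

/-- Contracting the first leg of the first hexagon gives `R = (1 ⊗ (ε ⊗ id) R) * R`. -/
theorem IsQT.κ1_R (hH : H.IsQuasiHopf) {R Rinv : G ⊗[k] G} (hR : H.IsQT R Rinv) :
    H.κ1 G R = 1 := by
  have hhex := congrArg (H.κ1 (G ⊗[k] G)) hR.hexagon1
  simp only [κ1_assoc_map_Δ hH, map_mul, κ1_c23, κ1_c12, hH.counit_mid, κ1_e13, hH.κ1_φ',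
    e23_apply, κ1_tmul, hH.κ1_φ, map_one, one_smul, one_mul, mul_one] at hhex
  have h1 : (1 : G) ⊗ₜ[k] H.κ1 G R = 1 := by
    rw [← mul_one ((1 : G) ⊗ₜ[k] H.κ1 G R), ← hR.mul_inv, ← mul_assoc, ← hhex, hR.mul_inv]
  simpa using congrArg (H.κ1 G) h1

theorem IsQT.e13_mul_c23_mul_e23 (hH : H.IsQuasiHopf) {R Rinv : G ⊗[k] G} (hR : H.IsQT R Rinv) :
    e13 k G R * c23 k G H.φ' * e23 k G R = c23 k G (c12 k G H.φ') *
      Algebra.TensorProduct.assoc k k k G G G (Algebra.TensorProduct.map H.Δ (AlgHom.id k G) R) *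
      H.φ' := by
  have hcyc : c23 k G (c12 k G H.φ') * c23 k G (c12 k G H.φ) = 1 := by
    rw [← map_mul, ← map_mul, hH.φ_inv_mul, map_one, map_one]
  rw [hR.hexagon1]
  simp only [← mul_assoc]
  rw [hcyc, one_mul, mul_assoc _ H.φ, hH.φ_mul_inv, mul_one]

theorem IsQuasiHopf.act_c23_c12_φ' (hH : H.IsQuasiHopf) :
    H.act (H.act (H.α ⊗ₜ 1) (c23 k G (c12 k G H.φ))) (c23 k G (c12 k G H.φ')) = H.α ⊗ₜ 1 := by
  rw [← act_mul hH, ← map_mul, ← map_mul, hH.φ_mul_inv, map_one, map_one, act_one hH]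

theorem IsQT.act_e13_mul_c23_mul_R (hH : H.IsQuasiHopf) {R Rinv : G ⊗[k] G}
    (hR : H.IsQT R Rinv) :
    H.act (H.act (H.α ⊗ₜ 1) (c23 k G (c12 k G H.φ))) (e13 k G R * c23 k G H.φ') * R =
      H.act (H.α ⊗ₜ 1) H.φ' := by
  rw [← act_e23 hH, ← act_mul hH, hR.e13_mul_c23_mul_e23 hH, act_mul hH, act_mul hH,
    hH.act_c23_c12_φ', act_assoc_map_Δ hH, hR.κ1_R hH]

lemma antipodeContract_oΔo_mul (hH : H.IsQuasiHopf) (u : G ⊗[k] (G ⊗[k] G))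
    (V : G ⊗[k] (G ⊗[k] (G ⊗[k] G))) :
    H.antipodeContract (H.oΔo u * V) =
      Algebra.TensorProduct.map (AlgHom.id k G) (H.κ1 G) u * H.antipodeContract V := by
  induction V using TensorProduct.induction_on with
  | zero => simp
  | tmul x ψ =>
    induction u using TensorProduct.induction_on₃ with
    | zero => simp
    | tmul a b c =>
      have hΔ := act_assoc_map_Δ hH (b ⊗ₜ c)
      rw [Algebra.TensorProduct.map_tmul, AlgHom.id_apply] at hΔ
      rw [oΔo_tmul, tmul_mul_tmul, antipodeContract_tmul, act_mul hH, hΔ,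
        act_tmul_right, antipodeContract_tmul, Algebra.TensorProduct.map_tmul, AlgHom.id_apply,
        κ1_tmul]
      simp only [← mul_assoc, tmul_mul_tmul, one_mul, mul_one]
    | add u v hu hv => simp only [map_add, add_mul, hu, hv]
  | add V W hV hW => simp only [mul_add, map_add, hV, hW]

lemma antipodeContract_mul_Δoo (hH : H.IsQuasiHopf) (V : G ⊗[k] (G ⊗[k] (G ⊗[k] G)))
    (w : G ⊗[k] (G ⊗[k] G)) :
    H.antipodeContract (V * H.Δoo w) = H.antipodeContract V * H.κ1 (G ⊗[k] G) w := by
  have hassoc : ∀ (x : G) (ψ : G ⊗[k] (G ⊗[k] G)) (q r : G ⊗[k] G),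
      H.antipodeContract ((x ⊗ₜ ψ) * Algebra.TensorProduct.assoc k k k G G (G ⊗[k] G) (q ⊗ₜ r)) =
        ((x * H.antipodeRight q) ⊗ₜ (1 : G)) * H.act (H.α ⊗ₜ 1) ψ * r := by
    intro x ψ q r
    induction q using TensorProduct.induction_on with
    | zero => simp
    | tmul q₁ q₂ =>
      rw [Algebra.TensorProduct.assoc_tmul, tmul_mul_tmul, antipodeContract_tmul, act_mul hH,
        act_tmul, antipodeRight_tmul]
      simp only [← mul_assoc, tmul_mul_tmul, mul_one]
    | add q q' hq hq' => simp only [add_tmul, map_add, mul_add, add_mul, hq, hq']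
  induction V using TensorProduct.induction_on with
  | zero => simp
  | tmul x ψ =>
    induction w using TensorProduct.induction_on with
    | zero => simp
    | tmul p r =>
      rw [Δoo_tmul, hassoc, κ1_tmul, antipodeContract_tmul, hH.antipodeRight_Δ, mul_smul_comm,
        ← smul_tmul', smul_mul_assoc, smul_mul_assoc, mul_smul_comm]
    | add w v hw hv => simp only [map_add, mul_add, hw, hv]
  | add V W hV hW => simp only [add_mul, map_add, hV, hW]

lemma IsQuasiHopf.antipodeContract_padR_φ (hH : H.IsQuasiHopf) :
    H.antipodeContract (padR k G H.φ) = 1 := by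
  have hpadR : ∀ ψ : G ⊗[k] (G ⊗[k] G), H.antipodeContract (padR k G ψ) =
      LinearMap.mul' k G (map (LinearMap.mulRight k H.β) (LinearMap.mul' k G ∘ₗ
        map (LinearMap.mulRight k H.α ∘ₗ H.S.toLinearMap) LinearMap.id) ψ) ⊗ₜ 1 := by
    intro ψ
    induction ψ using TensorProduct.induction_on₃ with
    | zero => simp
    | tmul a b c => simp [tmul_mul_tmul, mul_assoc]
    | add x y hx hy => simp only [padR_add, map_add, hx, hy, add_tmul]
  rw [hpadR, hH.antipode_φ, Algebra.TensorProduct.one_def]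

lemma IsQuasiHopf.one_tmul_φ'_mul_ooΔ (hH : H.IsQuasiHopf) :
    ((1 : G) ⊗ₜ H.φ') * H.ooΔ H.φ = H.oΔo H.φ * padR k G H.φ * H.Δoo H.φ' := by
  calc ((1 : G) ⊗ₜ H.φ') * H.ooΔ H.φ
      = ((1 : G) ⊗ₜ H.φ') * (H.ooΔ H.φ * H.Δoo H.φ) * H.Δoo H.φ' := by
        rw [mul_assoc _ _ (H.Δoo H.φ'), mul_assoc (H.ooΔ H.φ), ← map_mul, hH.φ_mul_inv, map_one,
          mul_one]
    _ = ((1 : G) ⊗ₜ H.φ' * (1 : G) ⊗ₜ H.φ) * H.oΔo H.φ * padR k G H.φ * H.Δoo H.φ' := by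
        rw [hH.pentagon]
        simp only [mul_assoc]
    _ = H.oΔo H.φ * padR k G H.φ * H.Δoo H.φ' := by
        rw [tmul_mul_tmul, one_mul, hH.φ_inv_mul, ← Algebra.TensorProduct.one_def, one_mul]

theorem IsQuasiHopf.antipodeContract_one_tmul_φ'_mul_ooΔ (hH : H.IsQuasiHopf) :
    H.antipodeContract (((1 : G) ⊗ₜ H.φ') * H.ooΔ H.φ) = 1 := by
  rw [hH.one_tmul_φ'_mul_ooΔ, antipodeContract_mul_Δoo hH, antipodeContract_oΔo_mul hH,
    hH.counit_mid, hH.antipodeContract_padR_φ, hH.κ1_φ', one_mul, mul_one]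

lemma antipodeContract_one_tmul_mul_ooΔ (hH : H.IsQuasiHopf) (ψ : G ⊗[k] (G ⊗[k] G))
    (x y z : G) :
    H.antipodeContract (((1 : G) ⊗ₜ ψ) * H.ooΔ (x ⊗ₜ (y ⊗ₜ z))) =
      ((x * H.β * H.S y) ⊗ₜ (1 : G)) * H.act (H.α ⊗ₜ 1) ψ * H.Δ z := by
  rw [ooΔ_tmul, tmul_mul_tmul, one_mul, antipodeContract_tmul, act_mul hH, act_tmul]
  simp only [← mul_assoc, tmul_mul_tmul, mul_one]

section Sums

variable {ι ι' : Type} [Fintype ι] [Fintype ι'] {X Y Z : ι → G} {P Q R₀ : ι' → G}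

theorem IsQuasiHopf.sum_mul_act_φ'_mul_Δ (hH : H.IsQuasiHopf)
    (hφ : H.φ = ∑ j : ι, X j ⊗ₜ[k] (Y j ⊗ₜ[k] Z j)) :
    ∑ j : ι, ((X j * H.β * H.S (Y j)) ⊗ₜ (1 : G)) * H.act (H.α ⊗ₜ 1) H.φ' * H.Δ (Z j) = 1 := by
  rw [← hH.antipodeContract_one_tmul_φ'_mul_ooΔ]
  conv_rhs => rw [hφ]
  simp only [map_sum, Finset.mul_sum, antipodeContract_one_tmul_mul_ooΔ hH]

lemma map_S_qop (hH : H.IsQuasiHopf) (hφ : H.φ = ∑ j : ι, X j ⊗ₜ[k] (Y j ⊗ₜ[k] Z j)) :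
    map H.S.toLinearMap LinearMap.id (∑ l : ι, (H.S.symm (H.α * Z l) * Y l) ⊗ₜ[k] X l) =
      H.act (H.α ⊗ₜ 1) (c23 k G (c12 k G H.φ)) := by
  rw [hφ]
  simp [hH.S_mul, tmul_mul_tmul, mul_assoc]

lemma act_c23_φ' (hφ' : H.φ' = ∑ i : ι', P i ⊗ₜ[k] (Q i ⊗ₜ[k] R₀ i)) (t : G ⊗[k] G) :
    H.act t (c23 k G H.φ') = ∑ i : ι', (H.S (P i) ⊗ₜ (1 : G)) * t * (R₀ i ⊗ₜ Q i) := by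
  simp [hφ']

lemma sum_map_S_qop_mul (hH : H.IsQuasiHopf) (hφ : H.φ = ∑ j : ι, X j ⊗ₜ[k] (Y j ⊗ₜ[k] Z j))
    (hφ' : H.φ' = ∑ i : ι', P i ⊗ₜ[k] (Q i ⊗ₜ[k] R₀ i)) (w : G ⊗[k] G) :
    ∑ j : ι, ∑ i : ι', ((X j * H.β * H.S (P i * Y j)) ⊗ₜ[k] (1 : G)) *
      map H.S.toLinearMap LinearMap.id ((∑ l : ι, (H.S.symm (H.α * Z l) * Y l) ⊗ₜ[k] X l) * w) *
      ((R₀ i ⊗ₜ[k] Q i) * H.Δop (Z j)) =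
    ∑ j : ι, ((X j * H.β * H.S (Y j)) ⊗ₜ (1 : G)) *
      H.act (H.act (H.α ⊗ₜ 1) (c23 k G (c12 k G H.φ))) (e13 k G w * c23 k G H.φ') *
      H.Δop (Z j) := by
  rw [map_S_mul hH, map_S_qop hH hφ]
  refine Finset.sum_congr rfl fun j _ => ?_
  rw [act_mul hH, act_c23_φ' hφ', Finset.mul_sum, Finset.sum_mul]
  refine Finset.sum_congr rfl fun i _ => ?_
  simp only [hH.S_mul, ← mul_assoc, tmul_mul_tmul, mul_one]

end Sums

end QuasiHopfData

end QHA

open QHA in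
theorem statement0_general
    (k G : Type) [Field k] [Ring G] [Algebra k G]
    (H : QuasiHopfData k G) (hH : H.IsQuasiHopf)
    (R Rinv : G ⊗[k] G) (hR : H.IsQT R Rinv)
    (ι ι' : Type) [Fintype ι] [Fintype ι']
    (X Y Z : ι → G) (P Q R₀ : ι' → G)
    (hφ : H.φ = ∑ j : ι, X j ⊗ₜ[k] (Y j ⊗ₜ[k] Z j))
    (hφ' : H.φ' = ∑ i : ι', P i ⊗ₜ[k] (Q i ⊗ₜ[k] R₀ i)) :
    Rinv = ∑ j : ι, ∑ i : ι',
      ((X j * H.β * H.S (P i * Y j)) ⊗ₜ[k] (1:G)) *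
      (TensorProduct.map H.S.toLinearMap LinearMap.id
        ((∑ l : ι, (H.S.symm (H.α * Z l) * Y l) ⊗ₜ[k] X l) * R)) *
      ((R₀ i ⊗ₜ[k] Q i) * H.Δop (Z j)) := by
  rw [QuasiHopfData.sum_map_S_qop_mul hH hφ hφ']
  refine (left_inv_eq_right_inv ?_ hR.mul_inv).symm
  calc (∑ j : ι, ((X j * H.β * H.S (Y j)) ⊗ₜ (1 : G)) *
        H.act (H.act (H.α ⊗ₜ 1) (c23 k G (c12 k G H.φ))) (e13 k G R * c23 k G H.φ') *
        H.Δop (Z j)) * R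
      = ∑ j : ι, ((X j * H.β * H.S (Y j)) ⊗ₜ (1 : G)) *
        (H.act (H.act (H.α ⊗ₜ 1) (c23 k G (c12 k G H.φ))) (e13 k G R * c23 k G H.φ') * R) *
        H.Δ (Z j) := by
        simp only [Finset.sum_mul, mul_assoc, hR.intertwine]
    _ = ∑ j : ι, ((X j * H.β * H.S (Y j)) ⊗ₜ (1 : G)) * H.act (H.α ⊗ₜ 1) H.φ' * H.Δ (Z j) := by
        rw [hR.act_e13_mul_c23_mul_R hH]
    _ = 1 := hH.sum_mul_act_φ'_mul_Δ hφ

open QHA in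
/-- For a finite-dimensional quasi-Hopf algebra `(G,Δ,ε,φ,S,α,β)`
with invertible antipode and a quasitriangular `R` (with inverse `Rinv`), writing
`φ = Xʲ⊗Yʲ⊗Zʲ` and `φ⁻¹ = Pⁱ⊗Qⁱ⊗Rⁱ` and `q_ρ = Xⁱ ⊗ S⁻¹(α·Zⁱ)·Yⁱ`, one has
`R⁻¹ = [Xʲ β S(Pⁱ Yʲ) ⊗ 1] · (S⊗id)(q_ρᵒᵖ·R) · [(Rⁱ⊗Qⁱ)·Δᵒᵖ(Zʲ)]`. -/
theorem statement0
    (k G : Type) [Field k] [Ring G] [Algebra k G] [FiniteDimensional k G]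
    (H : QuasiHopfData k G) (hH : H.IsQuasiHopf)
    (R Rinv : G ⊗[k] G) (hR : H.IsQT R Rinv)
    (ι ι' : Type) [Fintype ι] [Fintype ι']
    (X Y Z : ι → G) (P Q R₀ : ι' → G)
    (hφ : H.φ = ∑ j : ι, X j ⊗ₜ[k] (Y j ⊗ₜ[k] Z j))
    (hφ' : H.φ' = ∑ i : ι', P i ⊗ₜ[k] (Q i ⊗ₜ[k] R₀ i)) :
    Rinv = ∑ j : ι, ∑ i : ι',
      ((X j * H.β * H.S (P i * Y j)) ⊗ₜ[k] (1:G)) *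
      (TensorProduct.map H.S.toLinearMap LinearMap.id
        ((∑ l : ι, (H.S.symm (H.α * Z l) * Y l) ⊗ₜ[k] X l) * R)) *
      ((R₀ i ⊗ₜ[k] Q i) * H.Δop (Z j)) :=
  statement0_general k G H hH R Rinv hR ι ι' X Y Z P Q R₀ hφ hφ'
end
end

section
/- Let (G,Δ,ε,φ,S,α,β) be a finite-dimensional quasi-Hopf algebra over a field k with invertible antipode S, and define p_λ := Yⁱ·S⁻¹(Xⁱ·β) ⊗ Zⁱ, p_ρ := Pⁱ ⊗ Qⁱ·β·S(Rⁱ), q_λ := S(Pⁱ)·α·Qⁱ ⊗ Rⁱ, q_ρ := Xⁱ ⊗ S⁻¹(α·Zⁱ)·Yⁱ, where φ = Xⁱ⊗Yⁱ⊗Zⁱ and φ⁻¹ = Pⁱ⊗Qⁱ⊗Rⁱ (implicit summation). Writing p_λ = p_λ¹⊗p_λ², etc., the following four identities hold in G⊗G: (1) [S(p_λ¹)⊗1]·q_λ·Δ(p_λ²) = 1⊗1; (2) [1⊗S⁻¹(p_ρ²)]·q_ρ·Δ(p_ρ¹) = 1⊗1; (3) Δ(q_λ²)·p_λ·[S⁻¹(q_λ¹)⊗1]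 = 1⊗1; (4) Δ(q_ρ¹)·p_ρ·[1⊗S(q_ρ²)] = 1⊗1. -/
open TensorProduct

set_option maxSynthPendingDepth 8
set_option synthInstance.maxHeartbeats 1000000
set_option maxHeartbeats 1000000

noncomputable section

namespace QHAProof

open QHA TensorProduct

variable {k G : Type} [Field k] [Ring G] [Algebra k G]

/-- `padR` as an algebra hom. -/
def padRHom : (G ⊗[k] (G ⊗[k] G)) →ₐ[k] G ⊗[k] (G ⊗[k] (G ⊗[k] G)) :=
  ((Algebra.TensorProduct.map (AlgHom.id k G)
      (Algebra.TensorProduct.assoc k k k G G G).toAlgHom).comp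
    ((Algebra.TensorProduct.assoc k k k G (G ⊗[k] G) G).toAlgHom)).comp
    Algebra.TensorProduct.includeLeft

lemma padR_eq (ψ : G ⊗[k] (G ⊗[k] G)) : QHA.padR k G ψ = padRHom ψ := rfl

lemma padRHom_tmul (a b c : G) :
    (padRHom (a ⊗ₜ[k] (b ⊗ₜ[k] c)) : G ⊗[k] (G ⊗[k] (G ⊗[k] G)))
      = a ⊗ₜ[k] (b ⊗ₜ[k] (c ⊗ₜ[k] (1:G))) := by
  simp [padRHom, Algebra.TensorProduct.assoc_tmul]

variable (H : QuasiHopfData k G)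

lemma κ1_apply (M : Type) [Ring M] [Algebra k M] (a : G) (m : M) :
    H.κ1 M (a ⊗ₜ[k] m) = H.ε a • m := by
  simp [QuasiHopfData.κ1]

lemma κ2_apply (M : Type) [Ring M] [Algebra k M] (a : G) (m : M) :
    H.κ2 M (m ⊗ₜ[k] a) = H.ε a • m := by
  simp [QuasiHopfData.κ2, Algebra.TensorProduct.rid_tmul]

lemma Δoo_apply (a : G) (m : G ⊗[k] G) :
    H.Δoo (a ⊗ₜ[k] m)
      = (Algebra.TensorProduct.assoc k k k G G (G ⊗[k] G)) (H.Δ a ⊗ₜ[k] m) := by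
  simp [QuasiHopfData.Δoo]

lemma oΔo_apply (a b c : G) :
    H.oΔo (a ⊗ₜ[k] (b ⊗ₜ[k] c))
      = a ⊗ₜ[k] ((Algebra.TensorProduct.assoc k k k G G G) (H.Δ b ⊗ₜ[k] c)) := by
  simp [QuasiHopfData.oΔo]

lemma ooΔ_apply (a b c : G) :
    H.ooΔ (a ⊗ₜ[k] (b ⊗ₜ[k] c)) = a ⊗ₜ[k] (b ⊗ₜ[k] H.Δ c) := by
  simp [QuasiHopfData.ooΔ]

/-- antipode-left contraction `x ⊗ y ↦ S x * α * y`. -/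
def AL : G ⊗[k] G →ₗ[k] G :=
  (LinearMap.mul' k G) ∘ₗ (TensorProduct.map
    ((LinearMap.mulRight k H.α) ∘ₗ H.S.toLinearMap) LinearMap.id)

/-- antipode-right contraction `x ⊗ y ↦ x * β * S y`. -/
def BR : G ⊗[k] G →ₗ[k] G :=
  (LinearMap.mul' k G) ∘ₗ (TensorProduct.map
    (LinearMap.mulRight k H.β) H.S.toLinearMap)

@[simp] lemma AL_tmul (x y : G) : AL H (x ⊗ₜ[k] y) = H.S x * H.α * y := by
  simp [AL]

@[simp] lemma BR_tmul (x y : G) : BR H (x ⊗ₜ[k] y) = x * H.β * H.S y := by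
  simp [BR]

variable (hH : H.IsQuasiHopf)
include hH

lemma AL_Δ (a : G) : AL H (H.Δ a) = H.ε a • H.α := hH.antipode_left a

lemma BR_Δ (a : G) : BR H (H.Δ a) = H.ε a • H.β := hH.antipode_right a

lemma Ssymm_mul (u v : G) : H.S.symm (u * v) = H.S.symm v * H.S.symm u := by
  apply H.S.injective
  rw [hH.S_mul]
  simp

lemma Ssymm_one : H.S.symm (1:G) = 1 := by
  apply H.S.injective; rw [hH.S_one]; simp

end QHAProof

namespace QHAProof

open QHA TensorProduct

variable {k G : Type} [Field k] [Ring G] [Algebra k G] (H : QuasiHopfData k G)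

/-- `x ⊗ y ↦ S⁻¹(α y) x`. -/
def N1 : G ⊗[k] G →ₗ[k] G :=
  TensorProduct.lift (LinearMap.mk₂ k (fun x y => H.S.symm (H.α * y) * x)
    (by intros; simp [mul_add, add_mul, map_add, map_smul, smul_mul_assoc, mul_smul_comm])
    (by intros; simp [mul_add, add_mul, map_add, map_smul, smul_mul_assoc, mul_smul_comm])
    (by intros; simp [mul_add, add_mul, map_add, map_smul, smul_mul_assoc, mul_smul_comm])
    (by intros; simp [mul_add, add_mul, map_add, map_smul, smul_mul_assoc, mul_smul_comm]))

@[simp] lemma N1_tmul (x y : G) : N1 H (x ⊗ₜ[k] y) = H.S.symm (H.α * y) * x := rfl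

/-- `x ⊗ y ↦ y * S⁻¹(x β)`. -/
def N2 : G ⊗[k] G →ₗ[k] G :=
  TensorProduct.lift (LinearMap.mk₂ k (fun x y => y * H.S.symm (x * H.β))
    (by intros; simp [mul_add, add_mul, map_add, map_smul, smul_mul_assoc, mul_smul_comm])
    (by intros; simp [mul_add, add_mul, map_add, map_smul, smul_mul_assoc, mul_smul_comm])
    (by intros; simp [mul_add, add_mul, map_add, map_smul, smul_mul_assoc, mul_smul_comm])
    (by intros; simp [mul_add, add_mul, map_add, map_smul, smul_mul_assoc, mul_smul_comm]))

@[simp] lemma N2_tmul (x y : G) : N2 H (x ⊗ₜ[k] y) = y * H.S.symm (x * H.β) := rfl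

/-- inner contraction for `W` : `b ⊗ (c ⊗ d) ↦ b β (S c · α · d)`. -/
def fW : G ⊗[k] (G ⊗[k] G) →ₗ[k] G :=
  TensorProduct.lift (LinearMap.mk₂ k (fun b y => b * H.β * AL H y)
    (by intros; simp [mul_add, add_mul, map_add, map_smul, smul_mul_assoc, mul_smul_comm])
    (by intros; simp [mul_add, add_mul, map_add, map_smul, smul_mul_assoc, mul_smul_comm])
    (by intros; simp [mul_add, add_mul, map_add, map_smul, smul_mul_assoc, mul_smul_comm])
    (by intros; simp [mul_add, add_mul, map_add, map_smul, smul_mul_assoc, mul_smul_comm]))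

/-- `W : a⊗b⊗c⊗d ↦ a ⊗ (b β S(c) α d)`. -/
def Wc : G ⊗[k] (G ⊗[k] (G ⊗[k] G)) →ₗ[k] G ⊗[k] G :=
  TensorProduct.map LinearMap.id (fW H)

@[simp] lemma Wc_tmul (a b c d : G) :
    Wc H (a ⊗ₜ[k] (b ⊗ₜ[k] (c ⊗ₜ[k] d))) = a ⊗ₜ[k] (b * H.β * (H.S c * H.α * d)) := by
  simp [Wc, fW]

/-- inner contraction for `U` : `b ⊗ (c ⊗ d) ↦ S⁻¹(α c β S d) · b`. -/
def fU : G ⊗[k] (G ⊗[k] G) →ₗ[k] G :=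
  TensorProduct.lift (LinearMap.mk₂ k
    (fun b y => H.S.symm (H.α * BR H y) * b)
    (by intros; simp [mul_add, add_mul, map_add, map_smul, smul_mul_assoc, mul_smul_comm])
    (by intros; simp [mul_add, add_mul, map_add, map_smul, smul_mul_assoc, mul_smul_comm])
    (by intros; simp [mul_add, add_mul, map_add, map_smul, smul_mul_assoc, mul_smul_comm])
    (by intros; simp [mul_add, add_mul, map_add, map_smul, smul_mul_assoc, mul_smul_comm]))

/-- `U : a⊗b⊗c⊗d ↦ a ⊗ (S⁻¹(α c β S d) b)`. -/
def Uc : G ⊗[k] (G ⊗[k] (G ⊗[k] G)) →ₗ[k] G ⊗[k] G :=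
  TensorProduct.map LinearMap.id (fU H)

@[simp] lemma Uc_tmul (a b c d : G) :
    Uc H (a ⊗ₜ[k] (b ⊗ₜ[k] (c ⊗ₜ[k] d)))
      = a ⊗ₜ[k] (H.S.symm (H.α * (c * H.β * H.S d)) * b) := by
  simp [Uc, fU]

/-- reassociation `G⊗(G⊗(G⊗G)) → (G⊗(G⊗G))⊗G`. -/
def rearr : G ⊗[k] (G ⊗[k] (G ⊗[k] G)) →ₗ[k] (G ⊗[k] (G ⊗[k] G)) ⊗[k] G :=
  (TensorProduct.assoc k G (G ⊗[k] G) G).symm.toLinearMap ∘ₗ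
    (TensorProduct.map LinearMap.id (TensorProduct.assoc k G G G).symm.toLinearMap)

@[simp] lemma rearr_tmul (a b c d : G) :
    rearr (a ⊗ₜ[k] (b ⊗ₜ[k] (c ⊗ₜ[k] d))) = (a ⊗ₜ[k] (b ⊗ₜ[k] c)) ⊗ₜ[k] d := by
  simp [rearr]

/-- `a ⊗ (b ⊗ c) ↦ a β S(b) α c`. -/
def mV : G ⊗[k] (G ⊗[k] G) →ₗ[k] G :=
  TensorProduct.lift (LinearMap.mk₂ k (fun a y => a * H.β * AL H y)
    (by intros; simp [mul_add, add_mul, map_add, map_smul, smul_mul_assoc, mul_smul_comm])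
    (by intros; simp [mul_add, add_mul, map_add, map_smul, smul_mul_assoc, mul_smul_comm])
    (by intros; simp [mul_add, add_mul, map_add, map_smul, smul_mul_assoc, mul_smul_comm])
    (by intros; simp [mul_add, add_mul, map_add, map_smul, smul_mul_assoc, mul_smul_comm]))

/-- `V : a⊗b⊗c⊗d ↦ (a β S(b) α c) ⊗ d`. -/
def Vc : G ⊗[k] (G ⊗[k] (G ⊗[k] G)) →ₗ[k] G ⊗[k] G :=
  (TensorProduct.map (mV H) LinearMap.id) ∘ₗ rearr

@[simp] lemma Vc_tmul (a b c d : G) :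
    Vc H (a ⊗ₜ[k] (b ⊗ₜ[k] (c ⊗ₜ[k] d)))
      = (a * H.β * (H.S b * H.α * c)) ⊗ₜ[k] d := by
  simp [Vc, mV]

/-- `a ⊗ (b ⊗ c) ↦ c S⁻¹(α b β) a`. -/
def mT : G ⊗[k] (G ⊗[k] G) →ₗ[k] G :=
  TensorProduct.lift (LinearMap.mk₂ k
    (fun a y => TensorProduct.lift (LinearMap.mk₂ k
        (fun b c => c * H.S.symm (H.α * b * H.β))
        (by intros; simp [mul_add, add_mul, map_add, map_smul, smul_mul_assoc, mul_smul_comm])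
        (by intros; simp [mul_add, add_mul, map_add, map_smul, smul_mul_assoc, mul_smul_comm])
        (by intros; simp [mul_add, add_mul, map_add, map_smul, smul_mul_assoc, mul_smul_comm])
        (by intros; simp [mul_add, add_mul, map_add, map_smul, smul_mul_assoc, mul_smul_comm])) y * a)
    (by intros; simp [mul_add, add_mul, map_add, map_smul, smul_mul_assoc, mul_smul_comm])
    (by intros; simp [mul_add, add_mul, map_add, map_smul, smul_mul_assoc, mul_smul_comm])
    (by intros; simp [mul_add, add_mul, map_add, map_smul, smul_mul_assoc, mul_smul_comm])
    (by intros; simp [mul_add, add_mul, map_add, map_smul, smul_mul_assoc, mul_smul_comm]))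

/-- `T : a⊗b⊗c⊗d ↦ (c S⁻¹(α b β) a) ⊗ d`. -/
def Tc : G ⊗[k] (G ⊗[k] (G ⊗[k] G)) →ₗ[k] G ⊗[k] G :=
  (TensorProduct.map (mT H) LinearMap.id) ∘ₗ rearr

@[simp] lemma Tc_tmul (a b c d : G) :
    Tc H (a ⊗ₜ[k] (b ⊗ₜ[k] (c ⊗ₜ[k] d)))
      = (c * H.S.symm (H.α * b * H.β) * a) ⊗ₜ[k] d := by
  simp [Tc, mT]

variable (hH : H.IsQuasiHopf)
include hH

lemma N1_Δ (a : G) : N1 H (H.Δ a) = H.ε a • H.S.symm H.α := by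
  have h : N1 H = H.S.symm.toLinearMap ∘ₗ AL H := by
    apply TensorProduct.ext'
    intro x y
    simp [Ssymm_mul H hH, mul_assoc]
  rw [h]
  simp [AL_Δ H hH]

lemma N2_Δ (a : G) : N2 H (H.Δ a) = H.ε a • H.S.symm H.β := by
  have h : N2 H = H.S.symm.toLinearMap ∘ₗ BR H := by
    apply TensorProduct.ext'
    intro x y
    simp [Ssymm_mul H hH]
  rw [h]
  simp [BR_Δ H hH]

end QHAProof

set_option linter.unusedSectionVars false

namespace QHAProof

open QHA TensorProduct

variable {k G : Type} [Field k] [Ring G] [Algebra k G] (H : QuasiHopfData k G)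
variable {ι ι' : Type} [Fintype ι] [Fintype ι']

/-- contraction of leg 2 (of 4) with ε. -/
def Acon : G ⊗[k] (G ⊗[k] (G ⊗[k] G)) →ₐ[k] G ⊗[k] (G ⊗[k] G) :=
  Algebra.TensorProduct.map (AlgHom.id k G) (H.κ1 (G ⊗[k] G))

/-- contraction of leg 3 (of 4) with ε. -/
def Bcon : G ⊗[k] (G ⊗[k] (G ⊗[k] G)) →ₐ[k] G ⊗[k] (G ⊗[k] G) :=
  Algebra.TensorProduct.map (AlgHom.id k G)
    (Algebra.TensorProduct.map (AlgHom.id k G) (H.κ1 G))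

/-- contraction of the last leg (of 3) with ε. -/
def Econ : G ⊗[k] (G ⊗[k] G) →ₐ[k] G ⊗[k] G :=
  Algebra.TensorProduct.map (AlgHom.id k G) (H.κ2 G)

lemma Acon_tmul (a : G) (m : G ⊗[k] (G ⊗[k] G)) :
    Acon H (a ⊗ₜ[k] m) = a ⊗ₜ[k] H.κ1 (G ⊗[k] G) m := rfl

lemma Bcon_tmul (a b : G) (m : G ⊗[k] G) :
    Bcon H (a ⊗ₜ[k] (b ⊗ₜ[k] m)) = a ⊗ₜ[k] (b ⊗ₜ[k] H.κ1 G m) := rfl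

lemma Econ_tmul (a : G) (m : G ⊗[k] G) :
    Econ H (a ⊗ₜ[k] m) = a ⊗ₜ[k] H.κ2 G m := rfl

variable (X Y Z : ι → G) (P Q R₀ : ι' → G)

section eps

variable (hH : H.IsQuasiHopf)
  (hφ : H.φ = ∑ i : ι, X i ⊗ₜ[k] (Y i ⊗ₜ[k] Z i))
include hH hφ

lemma epsY : ∑ i : ι, H.ε (Y i) • (X i ⊗ₜ[k] Z i) = (1 : G ⊗[k] G) := by
  have h := hH.counit_mid
  rw [hφ, map_sum] at h
  rw [← h]
  apply Finset.sum_congr rfl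
  intro i _
  simp [κ1_apply, tmul_smul, smul_tmul']

lemma epsX : ∑ i : ι, H.ε (X i) • (Y i ⊗ₜ[k] Z i) = (1 : G ⊗[k] G) := by
  set vX : G ⊗[k] G := ∑ i : ι, H.ε (X i) • (Y i ⊗ₜ[k] Z i) with hvX
  have hA1 : Acon H (H.ooΔ H.φ) = 1 := by
    rw [hφ, map_sum, map_sum]
    have : ∀ i : ι, Acon H (H.ooΔ (X i ⊗ₜ[k] (Y i ⊗ₜ[k] Z i)))
        = (Algebra.TensorProduct.map (AlgHom.id k G) H.Δ)
            (H.ε (Y i) • (X i ⊗ₜ[k] Z i)) := by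
      intro i
      rw [ooΔ_apply, Acon_tmul, κ1_apply, map_smul]
      simp
    rw [Finset.sum_congr rfl (fun i _ => this i), ← map_sum, epsY H X Y Z hH hφ,
      map_one]
  have key2 : ∀ (t : G ⊗[k] G) (m : G ⊗[k] G),
      Acon H ((Algebra.TensorProduct.assoc k k k G G (G ⊗[k] G)) (t ⊗ₜ[k] m))
        = (H.κ2 G t) ⊗ₜ[k] m := by
    intro t m
    induction t using TensorProduct.induction_on with
    | zero => simp
    | tmul x y =>
        rw [Algebra.TensorProduct.assoc_tmul, Acon_tmul, κ1_apply, κ2_apply]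
        simp [smul_tmul', tmul_smul]
    | add u v hu hv => simp [add_tmul, map_add, hu, hv]
  have hA2 : Acon H (H.Δoo H.φ) = H.φ := by
    rw [hφ, map_sum, map_sum]
    apply Finset.sum_congr rfl
    intro i _
    rw [Δoo_apply, key2, hH.counit_right]
  have key4 : ∀ (t : G ⊗[k] G) (z : G),
      H.κ1 (G ⊗[k] G) ((Algebra.TensorProduct.assoc k k k G G G) (t ⊗ₜ[k] z))
        = (H.κ1 G t) ⊗ₜ[k] z := by
    intro t z
    induction t using TensorProduct.induction_on with
    | zero => simp
    | tmul x y =>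
        rw [Algebra.TensorProduct.assoc_tmul, κ1_apply, κ1_apply]
        simp [smul_tmul']
    | add u v hu hv => simp [add_tmul, map_add, hu, hv]
  have hA4 : Acon H (H.oΔo H.φ) = H.φ := by
    rw [hφ, map_sum, map_sum]
    apply Finset.sum_congr rfl
    intro i _
    rw [oΔo_apply, Acon_tmul, key4, hH.counit_left]
  have hA3 : Acon H ((1:G) ⊗ₜ[k] H.φ) = (1:G) ⊗ₜ[k] vX := by
    rw [hφ, tmul_sum, map_sum, hvX, tmul_sum]
    apply Finset.sum_congr rfl
    intro i _
    rw [Acon_tmul, κ1_apply, tmul_smul]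
  have hA5 : Acon H (padRHom H.φ) = 1 := by
    rw [hφ, map_sum, map_sum]
    have : ∀ i : ι, Acon H (padRHom (X i ⊗ₜ[k] (Y i ⊗ₜ[k] Z i)))
        = QHA.e12 k G (H.ε (Y i) • (X i ⊗ₜ[k] Z i)) := by
      intro i
      rw [padRHom_tmul, Acon_tmul, κ1_apply, map_smul]
      simp [QHA.e12, tmul_smul]
    rw [Finset.sum_congr rfl (fun i _ => this i), ← map_sum, epsY H X Y Z hH hφ,
      map_one]
  have pent := hH.pentagon
  rw [padR_eq] at pent
  have c := congrArg (Acon H) pent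
  rw [map_mul, map_mul, map_mul, hA1, hA2, hA3, hA4, hA5, one_mul, mul_one] at c
  have c2 : (1 : G ⊗[k] (G ⊗[k] G)) = (1:G) ⊗ₜ[k] vX := by
    calc (1 : G ⊗[k] (G ⊗[k] G)) = H.φ * H.φ' := (hH.φ_mul_inv).symm
    _ = ((1:G) ⊗ₜ[k] vX * H.φ) * H.φ' := by rw [← c]
    _ = (1:G) ⊗ₜ[k] vX * (H.φ * H.φ') := by rw [mul_assoc]
    _ = (1:G) ⊗ₜ[k] vX := by rw [hH.φ_mul_inv, mul_one]
  have c3 := congrArg (H.κ1 (G ⊗[k] G)) c2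
  rw [map_one, κ1_apply, map_one, one_smul] at c3
  exact c3.symm

lemma epsZ : ∑ i : ι, H.ε (Z i) • (X i ⊗ₜ[k] Y i) = (1 : G ⊗[k] G) := by
  set vZ : G ⊗[k] G := ∑ i : ι, H.ε (Z i) • (X i ⊗ₜ[k] Y i) with hvZ
  have hB1 : Bcon H (H.ooΔ H.φ) = H.φ := by
    rw [hφ, map_sum, map_sum]
    apply Finset.sum_congr rfl
    intro i _
    rw [ooΔ_apply, Bcon_tmul, hH.counit_left]
  have key2 : ∀ (t : G ⊗[k] G) (y z : G),
      Bcon H ((Algebra.TensorProduct.assoc k k k G G (G ⊗[k] G)) (t ⊗ₜ[k] (y ⊗ₜ[k] z)))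
        = H.ε y • (Algebra.TensorProduct.assoc k k k G G G) (t ⊗ₜ[k] z) := by
    intro t y z
    induction t using TensorProduct.induction_on with
    | zero => simp
    | tmul u v =>
        rw [Algebra.TensorProduct.assoc_tmul, Algebra.TensorProduct.assoc_tmul,
          Bcon_tmul, κ1_apply]
        simp [tmul_smul]
    | add u v hu hv => simp [add_tmul, map_add, hu, hv, smul_add]
  have hB2 : Bcon H (H.Δoo H.φ) = 1 := by
    rw [hφ, map_sum, map_sum]
    have : ∀ i : ι, Bcon H (H.Δoo (X i ⊗ₜ[k] (Y i ⊗ₜ[k] Z i)))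
        = ((Algebra.TensorProduct.assoc k k k G G G).toAlgHom.comp
            (Algebra.TensorProduct.map H.Δ (AlgHom.id k G)))
            (H.ε (Y i) • (X i ⊗ₜ[k] Z i)) := by
      intro i
      rw [Δoo_apply, key2, map_smul]
      simp
    rw [Finset.sum_congr rfl (fun i _ => this i), ← map_sum, epsY H X Y Z hH hφ,
      map_one]
  have hB3 : Bcon H ((1:G) ⊗ₜ[k] H.φ) = 1 := by
    rw [hφ, tmul_sum, map_sum]
    have : ∀ i : ι, Bcon H ((1:G) ⊗ₜ[k] (X i ⊗ₜ[k] (Y i ⊗ₜ[k] Z i)))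
        = (1:G) ⊗ₜ[k] (H.ε (Y i) • (X i ⊗ₜ[k] Z i)) := by
      intro i
      rw [Bcon_tmul, κ1_apply, tmul_smul, tmul_smul]
    rw [Finset.sum_congr rfl (fun i _ => this i), ← tmul_sum,
      epsY H X Y Z hH hφ, ← Algebra.TensorProduct.one_def]
  have key4 : ∀ (t : G ⊗[k] G) (x z : G),
      Bcon H (x ⊗ₜ[k] (Algebra.TensorProduct.assoc k k k G G G) (t ⊗ₜ[k] z))
        = x ⊗ₜ[k] ((H.κ2 G t) ⊗ₜ[k] z) := by
    intro t x z
    induction t using TensorProduct.induction_on with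
    | zero => simp
    | tmul u v =>
        rw [Algebra.TensorProduct.assoc_tmul, Bcon_tmul, κ1_apply, κ2_apply]
        simp [smul_tmul', tmul_smul]
    | add u v hu hv =>
        simp only [add_tmul, map_add, tmul_add] at *
        rw [hu, hv]
  have hB4 : Bcon H (H.oΔo H.φ) = H.φ := by
    rw [hφ, map_sum, map_sum]
    apply Finset.sum_congr rfl
    intro i _
    rw [oΔo_apply, key4, hH.counit_right]
  have hB5 : Bcon H (padRHom H.φ) = QHA.e12 k G vZ := by
    rw [hφ, map_sum, map_sum, hvZ, map_sum]
    apply Finset.sum_congr rfl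
    intro i _
    rw [padRHom_tmul, Bcon_tmul, κ1_apply, map_smul]
    simp [QHA.e12, tmul_smul]
  have pent := hH.pentagon
  rw [padR_eq] at pent
  have c := congrArg (Bcon H) pent
  rw [map_mul, map_mul, map_mul, hB1, hB2, hB3, hB4, hB5, mul_one, one_mul] at c
  have c2 : QHA.e12 k G vZ = 1 := by
    calc QHA.e12 k G vZ = (H.φ' * H.φ) * QHA.e12 k G vZ := by
          rw [hH.φ_inv_mul, one_mul]
    _ = H.φ' * (H.φ * QHA.e12 k G vZ) := by rw [mul_assoc]
    _ = H.φ' * H.φ := by rw [← c]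
    _ = 1 := hH.φ_inv_mul
  have c3 := congrArg (Econ H) c2
  rw [map_one] at c3
  have c4 : Econ H (QHA.e12 k G vZ) = vZ := by
    rw [hvZ, map_sum, map_sum]
    apply Finset.sum_congr rfl
    intro i _
    rw [map_smul, map_smul]
    congr 1
    rw [show QHA.e12 k G (X i ⊗ₜ[k] Y i) = X i ⊗ₜ[k] (Y i ⊗ₜ[k] (1:G)) by
      simp [QHA.e12]]
    rw [Econ_tmul, κ2_apply, map_one, one_smul]
  rw [← c4, c3]

end eps

section epsprime

variable (hH : H.IsQuasiHopf)
  (hφ : H.φ = ∑ i : ι, X i ⊗ₜ[k] (Y i ⊗ₜ[k] Z i))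
  (hφ' : H.φ' = ∑ j : ι', P j ⊗ₜ[k] (Q j ⊗ₜ[k] R₀ j))
include hH hφ hφ'

lemma epsY' : ∑ j : ι', H.ε (Q j) • (P j ⊗ₜ[k] R₀ j) = (1 : G ⊗[k] G) := by
  have h : (Algebra.TensorProduct.map (AlgHom.id k G) (H.κ1 G)) H.φ' = 1 := by
    have h2 := congrArg (Algebra.TensorProduct.map (AlgHom.id k G) (H.κ1 G))
      hH.φ_mul_inv
    rw [map_mul, map_one, hH.counit_mid, one_mul] at h2
    exact h2
  rw [hφ', map_sum] at h
  rw [← h]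
  apply Finset.sum_congr rfl
  intro j _
  simp [κ1_apply, tmul_smul]

lemma epsX' : ∑ j : ι', H.ε (P j) • (Q j ⊗ₜ[k] R₀ j) = (1 : G ⊗[k] G) := by
  have h : (H.κ1 (G ⊗[k] G)) H.φ' = 1 := by
    have h1 : (H.κ1 (G ⊗[k] G)) H.φ = 1 := by
      rw [hφ, map_sum]
      have : ∀ i : ι, (H.κ1 (G ⊗[k] G)) (X i ⊗ₜ[k] (Y i ⊗ₜ[k] Z i))
          = H.ε (X i) • (Y i ⊗ₜ[k] Z i) := fun i => κ1_apply H _ _ _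
      rw [Finset.sum_congr rfl (fun i _ => this i), epsX H X Y Z hH hφ]
    have h2 := congrArg (H.κ1 (G ⊗[k] G)) hH.φ_mul_inv
    rw [map_mul, map_one, h1, one_mul] at h2
    exact h2
  rw [hφ', map_sum] at h
  rw [← h]
  apply Finset.sum_congr rfl
  intro j _
  rw [κ1_apply]

lemma epsZ' : ∑ j : ι', H.ε (R₀ j) • (P j ⊗ₜ[k] Q j) = (1 : G ⊗[k] G) := by
  have h : (Econ H) H.φ' = 1 := by
    have h1 : (Econ H) H.φ = 1 := by
      rw [hφ, map_sum]
      have : ∀ i : ι, (Econ H) (X i ⊗ₜ[k] (Y i ⊗ₜ[k] Z i))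
          = H.ε (Z i) • (X i ⊗ₜ[k] Y i) := by
        intro i
        rw [Econ_tmul, κ2_apply, tmul_smul]
      rw [Finset.sum_congr rfl (fun i _ => this i), epsZ H X Y Z hH hφ]
    have h2 := congrArg (Econ H) hH.φ_mul_inv
    rw [map_mul, map_one, h1, one_mul] at h2
    exact h2
  rw [hφ', map_sum] at h
  rw [← h]
  apply Finset.sum_congr rfl
  intro j _
  rw [Econ_tmul, κ2_apply, tmul_smul]

lemma aphi : ∑ i : ι, X i * H.β * (H.S (Y i) * H.α * Z i) = (1:G) := by
  have h := hH.antipode_φ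
  rw [hφ, map_sum, map_sum] at h
  rw [← h]
  apply Finset.sum_congr rfl
  intro i _
  simp

lemma aphi' : ∑ j : ι', H.S (P j) * H.α * (Q j * H.β * H.S (R₀ j)) = (1:G) := by
  have h := hH.antipode_φ'
  rw [hφ', map_sum, map_sum] at h
  rw [← h]
  apply Finset.sum_congr rfl
  intro j _
  simp [mul_assoc]

end epsprime

end QHAProof

namespace QHAProof

open QHA TensorProduct

section helpers
variable {M : Type} [Monoid M]

lemma mh1 {b bi : M} (h : b * bi = 1) (a : M) : a = (a * b) * bi := by
  rw [mul_assoc, h, mul_one]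

lemma mh2 {b bi : M} (h : bi * b = 1) (a : M) : a = bi * (b * a) := by
  rw [← mul_assoc, h, one_mul]

lemma cancel_left {ai a : M} (h : ai * a = 1) (c : M) : ai * (a * c) = c := by
  rw [← mul_assoc, h, one_mul]

lemma cancel_right {b bi : M} (h : b * bi = 1) (a c : M) :
    (a * (c * b)) * bi = a * c := by
  rw [mul_assoc, mul_assoc, h, mul_one]

end helpers

variable {k G : Type} [Field k] [Ring G] [Algebra k G] (H : QuasiHopfData k G)
variable (hH : H.IsQuasiHopf)
include hH

lemma i_ooΔ : H.ooΔ H.φ * H.ooΔ H.φ' = 1 := by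
  rw [← map_mul, hH.φ_mul_inv, map_one]
lemma i_ooΔ' : H.ooΔ H.φ' * H.ooΔ H.φ = 1 := by
  rw [← map_mul, hH.φ_inv_mul, map_one]
lemma i_Δoo : H.Δoo H.φ * H.Δoo H.φ' = 1 := by
  rw [← map_mul, hH.φ_mul_inv, map_one]
lemma i_Δoo' : H.Δoo H.φ' * H.Δoo H.φ = 1 := by
  rw [← map_mul, hH.φ_inv_mul, map_one]
lemma i_oΔo : H.oΔo H.φ * H.oΔo H.φ' = 1 := by
  rw [← map_mul, hH.φ_mul_inv, map_one]
lemma i_oΔo' : H.oΔo H.φ' * H.oΔo H.φ = 1 := by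
  rw [← map_mul, hH.φ_inv_mul, map_one]
lemma i_padR : padRHom H.φ * padRHom H.φ' = 1 := by
  rw [← map_mul, hH.φ_mul_inv, map_one]
lemma i_padR' : padRHom H.φ' * padRHom H.φ = 1 := by
  rw [← map_mul, hH.φ_inv_mul, map_one]
lemma i_one : ((1:G) ⊗ₜ[k] H.φ) * ((1:G) ⊗ₜ[k] H.φ') = 1 := by
  rw [Algebra.TensorProduct.tmul_mul_tmul, one_mul, hH.φ_mul_inv,
    ← Algebra.TensorProduct.one_def]
lemma i_one' : ((1:G) ⊗ₜ[k] H.φ') * ((1:G) ⊗ₜ[k] H.φ) = 1 := by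
  rw [Algebra.TensorProduct.tmul_mul_tmul, one_mul, hH.φ_inv_mul,
    ← Algebra.TensorProduct.one_def]

lemma pent2 : H.ooΔ H.φ * H.Δoo H.φ
    = ((1:G) ⊗ₜ[k] H.φ) * (H.oΔo H.φ * padRHom H.φ) := by
  have p := hH.pentagon
  rw [padR_eq] at p
  rw [p, mul_assoc]

lemma R1 : ((1:G) ⊗ₜ[k] H.φ') * H.ooΔ H.φ
    = H.oΔo H.φ * (padRHom H.φ * H.Δoo H.φ') := by
  calc ((1:G) ⊗ₜ[k] H.φ') * H.ooΔ H.φ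
      = (((1:G) ⊗ₜ[k] H.φ') * H.ooΔ H.φ * H.Δoo H.φ) * H.Δoo H.φ' :=
        mh1 (i_Δoo H hH) _
    _ = (((1:G) ⊗ₜ[k] H.φ') * (H.ooΔ H.φ * H.Δoo H.φ)) * H.Δoo H.φ' := by
        rw [mul_assoc (((1:G) ⊗ₜ[k] H.φ')) (H.ooΔ H.φ) (H.Δoo H.φ)]
    _ = (H.oΔo H.φ * padRHom H.φ) * H.Δoo H.φ' := by
        rw [pent2 H hH, cancel_left (i_one' H hH)]
    _ = H.oΔo H.φ * (padRHom H.φ * H.Δoo H.φ') := by rw [mul_assoc]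

lemma R2 : padRHom H.φ * H.Δoo H.φ'
    = H.oΔo H.φ' * (((1:G) ⊗ₜ[k] H.φ') * H.ooΔ H.φ) := by
  rw [R1 H hH, cancel_left (i_oΔo' H hH)]

lemma R3 : H.ooΔ H.φ' * ((1:G) ⊗ₜ[k] H.φ)
    = H.Δoo H.φ * (padRHom H.φ' * H.oΔo H.φ') := by
  have h1 : H.Δoo H.φ = (H.ooΔ H.φ' * ((1:G) ⊗ₜ[k] H.φ)) *
      (H.oΔo H.φ * padRHom H.φ) := by
    calc H.Δoo H.φ = H.ooΔ H.φ' * (H.ooΔ H.φ * H.Δoo H.φ) :=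
          mh2 (i_ooΔ' H hH) _
      _ = H.ooΔ H.φ' * (((1:G) ⊗ₜ[k] H.φ) * (H.oΔo H.φ * padRHom H.φ)) := by
          rw [pent2 H hH]
      _ = (H.ooΔ H.φ' * ((1:G) ⊗ₜ[k] H.φ)) * (H.oΔo H.φ * padRHom H.φ) := by
          rw [mul_assoc]
  have hbb : (H.oΔo H.φ * padRHom H.φ) * (padRHom H.φ' * H.oΔo H.φ') = 1 := by
    rw [mul_assoc, cancel_left (i_padR H hH), i_oΔo H hH]
  calc H.ooΔ H.φ' * ((1:G) ⊗ₜ[k] H.φ)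
      = ((H.ooΔ H.φ' * ((1:G) ⊗ₜ[k] H.φ)) * (H.oΔo H.φ * padRHom H.φ)) *
          (padRHom H.φ' * H.oΔo H.φ') := mh1 hbb _
    _ = H.Δoo H.φ * (padRHom H.φ' * H.oΔo H.φ') := by rw [← h1]

lemma R4 : H.Δoo H.φ * padRHom H.φ'
    = H.ooΔ H.φ' * (((1:G) ⊗ₜ[k] H.φ) * H.oΔo H.φ) := by
  calc H.Δoo H.φ * padRHom H.φ'
      = (H.ooΔ H.φ' * (H.ooΔ H.φ * H.Δoo H.φ)) * padRHom H.φ' := by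
        rw [cancel_left (i_ooΔ' H hH)]
    _ = (H.ooΔ H.φ' * (((1:G) ⊗ₜ[k] H.φ) * (H.oΔo H.φ * padRHom H.φ))) *
          padRHom H.φ' := by rw [pent2 H hH]
    _ = (H.ooΔ H.φ' * (((1:G) ⊗ₜ[k] H.φ) * H.oΔo H.φ * padRHom H.φ)) *
          padRHom H.φ' := by rw [mul_assoc (((1:G) ⊗ₜ[k] H.φ))]
    _ = H.ooΔ H.φ' * (((1:G) ⊗ₜ[k] H.φ) * H.oΔo H.φ) :=
        cancel_right (i_padR H hH) _ _

lemma hALmul (t : G ⊗[k] G) (r s : G) :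
    AL H (t * (r ⊗ₜ[k] s)) = H.S r * AL H t * s := by
  induction t using TensorProduct.induction_on with
  | zero => simp
  | tmul x y =>
      rw [Algebra.TensorProduct.tmul_mul_tmul, AL_tmul, AL_tmul]
      simp [hH.S_mul, mul_assoc]
  | add u v hu hv => simp [add_mul, map_add, hu, hv, mul_add]

lemma hBRmul (t : G ⊗[k] G) (r s : G) :
    BR H ((r ⊗ₜ[k] s) * t) = r * BR H t * H.S s := by
  induction t using TensorProduct.induction_on with
  | zero => simp
  | tmul x y =>
      rw [Algebra.TensorProduct.tmul_mul_tmul, BR_tmul, BR_tmul]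
      simp [hH.S_mul, mul_assoc]
  | add u v hu hv => simp [mul_add, map_add, hu, hv, add_mul]

lemma fuseW (a : G) (u : G ⊗[k] (G ⊗[k] (G ⊗[k] G))) :
    Wc H (((1:G) ⊗ₜ[k] ((1:G) ⊗ₜ[k] H.Δ a)) * u) = H.ε a • Wc H u := by
  induction u using TensorProduct.induction_on with
  | zero => simp
  | add u v hu hv => rw [mul_add, map_add, map_add, hu, hv, smul_add]
  | tmul p m =>
    induction m using TensorProduct.induction_on with
    | zero => simp
    | add m n hm hn =>
        rw [tmul_add, mul_add, map_add, map_add, hm, hn, smul_add]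
    | tmul q v =>
      induction v using TensorProduct.induction_on with
      | zero => simp
      | add v w hv hw =>
          rw [tmul_add, tmul_add, mul_add, map_add, map_add, hv, hw, smul_add]
      | tmul r s =>
          rw [Algebra.TensorProduct.tmul_mul_tmul,
            Algebra.TensorProduct.tmul_mul_tmul, one_mul, one_mul]
          have h1 : Wc H (p ⊗ₜ[k] (q ⊗ₜ[k] (H.Δ a * (r ⊗ₜ[k] s))))
              = p ⊗ₜ[k] (q * H.β * AL H (H.Δ a * (r ⊗ₜ[k] s))) := by
            simp [Wc, fW]
          rw [h1, hALmul H hH, AL_Δ H hH, Wc_tmul]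
          simp [mul_smul_comm, smul_mul_assoc, tmul_smul, mul_assoc]
  
lemma fuseV (a : G) (u : G ⊗[k] (G ⊗[k] (G ⊗[k] G))) :
    Vc H (u * (Algebra.TensorProduct.assoc k k k G G (G ⊗[k] G))
        (H.Δ a ⊗ₜ[k] (1 : G ⊗[k] G)))
      = H.ε a • Vc H u := by
  induction u using TensorProduct.induction_on with
  | zero => simp
  | add u v hu hv => rw [add_mul, map_add, map_add, hu, hv, smul_add]
  | tmul p m =>
    induction m using TensorProduct.induction_on with
    | zero => simp
    | add m n hm hn =>
        rw [tmul_add, add_mul, map_add, map_add, hm, hn, smul_add]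
    | tmul q v =>
      induction v using TensorProduct.induction_on with
      | zero => simp
      | add v w hv hw =>
          rw [tmul_add, tmul_add, add_mul, map_add, map_add, hv, hw, smul_add]
      | tmul r s =>
          have key : ∀ t : G ⊗[k] G,
              Vc H ((p ⊗ₜ[k] (q ⊗ₜ[k] (r ⊗ₜ[k] s))) *
                (Algebra.TensorProduct.assoc k k k G G (G ⊗[k] G))
                  (t ⊗ₜ[k] (1 : G ⊗[k] G)))
              = (p * BR H t * (H.S q * H.α * r)) ⊗ₜ[k] s := by
            intro t
            induction t using TensorProduct.induction_on with
            | zero => simp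
            | tmul x y =>
                rw [Algebra.TensorProduct.assoc_tmul,
                  Algebra.TensorProduct.one_def,
                  Algebra.TensorProduct.tmul_mul_tmul,
                  Algebra.TensorProduct.tmul_mul_tmul,
                  Algebra.TensorProduct.tmul_mul_tmul, Vc_tmul, BR_tmul]
                simp [hH.S_mul, mul_assoc]
            | add t t' ht ht' =>
                simp only [add_tmul, map_add, mul_add, add_mul] at *
                rw [ht, ht']
          rw [key (H.Δ a), BR_Δ H hH, Vc_tmul]
          simp [mul_smul_comm, smul_mul_assoc, smul_tmul', mul_assoc]

lemma fuseU (a : G) (u : G ⊗[k] (G ⊗[k] (G ⊗[k] G))) :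
    Uc H (u * ((1:G) ⊗ₜ[k] ((1:G) ⊗ₜ[k] H.Δ a))) = H.ε a • Uc H u := by
  induction u using TensorProduct.induction_on with
  | zero => simp
  | add u v hu hv => rw [add_mul, map_add, map_add, hu, hv, smul_add]
  | tmul p m =>
    induction m using TensorProduct.induction_on with
    | zero => simp
    | add m n hm hn =>
        rw [tmul_add, add_mul, map_add, map_add, hm, hn, smul_add]
    | tmul q v =>
      induction v using TensorProduct.induction_on with
      | zero => simp
      | add v w hv hw =>
          rw [tmul_add, tmul_add, add_mul, map_add, map_add, hv, hw, smul_add]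
      | tmul r s =>
          rw [Algebra.TensorProduct.tmul_mul_tmul,
            Algebra.TensorProduct.tmul_mul_tmul, mul_one, mul_one]
          have h1 : ∀ v' : G ⊗[k] G, Uc H (p ⊗ₜ[k] (q ⊗ₜ[k] v'))
              = p ⊗ₜ[k] (H.S.symm (H.α * BR H v') * q) := by
            intro v'; simp [Uc, fU]
          rw [h1, h1, hBRmul H hH, BR_Δ H hH, BR_tmul]
          simp [mul_smul_comm, smul_mul_assoc, tmul_smul, map_smul]

lemma fuseT (a : G) (u : G ⊗[k] (G ⊗[k] (G ⊗[k] G))) :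
    Tc H ((Algebra.TensorProduct.assoc k k k G G (G ⊗[k] G))
        (H.Δ a ⊗ₜ[k] (1 : G ⊗[k] G)) * u)
      = H.ε a • Tc H u := by
  induction u using TensorProduct.induction_on with
  | zero => simp
  | add u v hu hv => rw [mul_add, map_add, map_add, hu, hv, smul_add]
  | tmul p m =>
    induction m using TensorProduct.induction_on with
    | zero => simp
    | add m n hm hn =>
        rw [tmul_add, mul_add, map_add, map_add, hm, hn, smul_add]
    | tmul q v =>
      induction v using TensorProduct.induction_on with
      | zero => simp
      | add v w hv hw =>
          rw [tmul_add, tmul_add, mul_add, map_add, map_add, hv, hw, smul_add]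
      | tmul r s =>
          have key : ∀ t : G ⊗[k] G,
              Tc H ((Algebra.TensorProduct.assoc k k k G G (G ⊗[k] G))
                  (t ⊗ₜ[k] (1 : G ⊗[k] G)) * (p ⊗ₜ[k] (q ⊗ₜ[k] (r ⊗ₜ[k] s))))
              = (r * H.S.symm (q * H.β) * N1 H t * p) ⊗ₜ[k] s := by
            intro t
            induction t using TensorProduct.induction_on with
            | zero => simp
            | tmul x y =>
                rw [Algebra.TensorProduct.assoc_tmul,
                  Algebra.TensorProduct.one_def,
                  Algebra.TensorProduct.tmul_mul_tmul,
                  Algebra.TensorProduct.tmul_mul_tmul,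
                  Algebra.TensorProduct.tmul_mul_tmul, Tc_tmul, N1_tmul,
                  one_mul]
                rw [show H.α * (y * q) * H.β = (H.α * y) * (q * H.β) by
                  simp [mul_assoc]]
                rw [Ssymm_mul H hH, one_mul]
                simp [mul_assoc]
            | add t t' ht ht' =>
                simp only [add_tmul, map_add, mul_add, add_mul] at *
                rw [ht, ht']
          rw [key (H.Δ a), N1_Δ H hH, Tc_tmul]
          have : H.α * q * H.β = (H.α) * (q * H.β) := by rw [mul_assoc]
          rw [this, Ssymm_mul H hH]
          simp [Ssymm_mul H hH, mul_smul_comm, smul_mul_assoc, smul_tmul',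
            mul_assoc]

end QHAProof

namespace QHAProof

open QHA TensorProduct

variable {k G : Type} [Field k] [Ring G] [Algebra k G] (H : QuasiHopfData k G)

/-- embedding `G⊗G → G⊗G⊗G⊗G` into legs 1,2. -/
def E4 : G ⊗[k] G →ₐ[k] G ⊗[k] (G ⊗[k] (G ⊗[k] G)) :=
  Algebra.TensorProduct.map (AlgHom.id k G) Algebra.TensorProduct.includeLeft

lemma E4_tmul (a b : G) :
    (E4 (a ⊗ₜ[k] b) : G ⊗[k] (G ⊗[k] (G ⊗[k] G)))
      = a ⊗ₜ[k] (b ⊗ₜ[k] (1 : G ⊗[k] G)) := by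
  simp [E4]

lemma splitA4 (t m : G ⊗[k] G) :
    (Algebra.TensorProduct.assoc k k k G G (G ⊗[k] G)) (t ⊗ₜ[k] m)
      = ((1:G) ⊗ₜ[k] ((1:G) ⊗ₜ[k] m)) *
        (Algebra.TensorProduct.assoc k k k G G (G ⊗[k] G)) (t ⊗ₜ[k] (1 : G ⊗[k] G)) := by
  induction t using TensorProduct.induction_on with
  | zero => simp
  | tmul x y =>
      rw [Algebra.TensorProduct.assoc_tmul, Algebra.TensorProduct.assoc_tmul,
        Algebra.TensorProduct.tmul_mul_tmul, Algebra.TensorProduct.tmul_mul_tmul,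
        one_mul, one_mul, mul_one]
  | add t t' ht ht' => simp only [add_tmul, map_add, mul_add] at *; rw [ht, ht']

lemma TcmulL (m : G ⊗[k] G) (u : G ⊗[k] (G ⊗[k] (G ⊗[k] G))) :
    Tc H (((1:G) ⊗ₜ[k] ((1:G) ⊗ₜ[k] m)) * u) = m * Tc H u := by
  induction u using TensorProduct.induction_on with
  | zero => simp
  | add u v hu hv => simp only [mul_add, map_add]; rw [hu, hv]
  | tmul p n =>
    induction n using TensorProduct.induction_on with
    | zero => simp
    | add n n' hn hn' =>
        simp only [tmul_add, mul_add, map_add]; rw [hn, hn']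
    | tmul q v =>
      induction v using TensorProduct.induction_on with
      | zero => simp
      | add v w hv hw =>
          simp only [tmul_add, mul_add, map_add]; rw [hv, hw]
      | tmul r s =>
          induction m using TensorProduct.induction_on with
          | zero => simp
          | add m m' hm hm' =>
              simp only [tmul_add, add_mul, map_add]; rw [hm, hm']
          | tmul m₁ m₂ =>
              rw [Algebra.TensorProduct.tmul_mul_tmul,
                Algebra.TensorProduct.tmul_mul_tmul,
                Algebra.TensorProduct.tmul_mul_tmul, one_mul, one_mul,
                Tc_tmul, Tc_tmul, Algebra.TensorProduct.tmul_mul_tmul]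
              simp [mul_assoc]

end QHAProof

set_option maxHeartbeats 4000000

open QHAProof

open QHA in
/-- The four identities (Lemma 2.3 / Eq. (2.27) of the paper)
relating `p_λ, p_ρ, q_λ, q_ρ`. -/
theorem statement4
    (k G : Type) [Field k] [Ring G] [Algebra k G] [FiniteDimensional k G]
    (H : QuasiHopfData k G) (hH : H.IsQuasiHopf)
    (ι ι' : Type) [Fintype ι] [Fintype ι']
    (X Y Z : ι → G) (P Q R₀ : ι' → G)
    (hφ : H.φ = ∑ i : ι, X i ⊗ₜ[k] (Y i ⊗ₜ[k] Z i))
    (hφ' : H.φ' = ∑ i : ι', P i ⊗ₜ[k] (Q i ⊗ₜ[k] R₀ i))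
    (pL pR qL qR : G ⊗[k] G)
    (hpL : pL = ∑ i : ι, (Y i * H.S.symm (X i * H.β)) ⊗ₜ[k] Z i)
    (hpR : pR = ∑ i : ι', P i ⊗ₜ[k] (Q i * H.β * H.S (R₀ i)))
    (hqL : qL = ∑ i : ι', (H.S (P i) * H.α * Q i) ⊗ₜ[k] R₀ i)
    (hqR : qR = ∑ i : ι, X i ⊗ₜ[k] (H.S.symm (H.α * Z i) * Y i)) :
    (∑ i : ι, (H.S (Y i * H.S.symm (X i * H.β)) ⊗ₜ[k] (1:G)) * qL * H.Δ (Z i)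
        = (1:G) ⊗ₜ[k] (1:G)) ∧
    (∑ i : ι', ((1:G) ⊗ₜ[k] H.S.symm (Q i * H.β * H.S (R₀ i))) * qR * H.Δ (P i)
        = (1:G) ⊗ₜ[k] (1:G)) ∧
    (∑ i : ι', H.Δ (R₀ i) * pL * (H.S.symm (H.S (P i) * H.α * Q i) ⊗ₜ[k] (1:G))
        = (1:G) ⊗ₜ[k] (1:G)) ∧
    (∑ i : ι, H.Δ (X i) * pR * ((1:G) ⊗ₜ[k] H.S (H.S.symm (H.α * Z i) * Y i))
        = (1:G) ⊗ₜ[k] (1:G)) := by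
  -- expansions of the structure maps applied to φ, φ'
  have eΔoo : H.Δoo H.φ = ∑ i : ι,
      (Algebra.TensorProduct.assoc k k k G G (G ⊗[k] G))
        (H.Δ (X i) ⊗ₜ[k] (Y i ⊗ₜ[k] Z i)) := by
    rw [hφ, map_sum]; exact Finset.sum_congr rfl fun i _ => Δoo_apply H _ _
  have eΔoo' : H.Δoo H.φ' = ∑ j : ι',
      (Algebra.TensorProduct.assoc k k k G G (G ⊗[k] G))
        (H.Δ (P j) ⊗ₜ[k] (Q j ⊗ₜ[k] R₀ j)) := by
    rw [hφ', map_sum]; exact Finset.sum_congr rfl fun j _ => Δoo_apply H _ _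
  have eooΔ : H.ooΔ H.φ = ∑ i : ι, X i ⊗ₜ[k] (Y i ⊗ₜ[k] H.Δ (Z i)) := by
    rw [hφ, map_sum]; exact Finset.sum_congr rfl fun i _ => ooΔ_apply H _ _ _
  have eooΔ' : H.ooΔ H.φ' = ∑ j : ι', P j ⊗ₜ[k] (Q j ⊗ₜ[k] H.Δ (R₀ j)) := by
    rw [hφ', map_sum]; exact Finset.sum_congr rfl fun j _ => ooΔ_apply H _ _ _
  have eoΔo : H.oΔo H.φ = ∑ i : ι,
      X i ⊗ₜ[k] ((Algebra.TensorProduct.assoc k k k G G G) (H.Δ (Y i) ⊗ₜ[k] Z i)) := by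
    rw [hφ, map_sum]; exact Finset.sum_congr rfl fun i _ => oΔo_apply H _ _ _
  have eoΔo' : H.oΔo H.φ' = ∑ j : ι',
      P j ⊗ₜ[k] ((Algebra.TensorProduct.assoc k k k G G G) (H.Δ (Q j) ⊗ₜ[k] R₀ j)) := by
    rw [hφ', map_sum]; exact Finset.sum_congr rfl fun j _ => oΔo_apply H _ _ _
  have epadR : padRHom H.φ = ∑ i : ι, X i ⊗ₜ[k] (Y i ⊗ₜ[k] (Z i ⊗ₜ[k] (1:G))) := by
    rw [hφ, map_sum]; exact Finset.sum_congr rfl fun i _ => padRHom_tmul _ _ _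
  have epadR' : padRHom H.φ' = ∑ j : ι',
      P j ⊗ₜ[k] (Q j ⊗ₜ[k] (R₀ j ⊗ₜ[k] (1:G))) := by
    rw [hφ', map_sum]; exact Finset.sum_congr rfl fun j _ => padRHom_tmul _ _ _
  have eone : ((1:G) ⊗ₜ[k] H.φ) = ∑ i : ι,
      (1:G) ⊗ₜ[k] (X i ⊗ₜ[k] (Y i ⊗ₜ[k] Z i)) := by rw [hφ, tmul_sum]
  have eone' : ((1:G) ⊗ₜ[k] H.φ') = ∑ j : ι',
      (1:G) ⊗ₜ[k] (P j ⊗ₜ[k] (Q j ⊗ₜ[k] R₀ j)) := by rw [hφ', tmul_sum]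
  -- counit contractions
  have hεY := epsY H X Y Z hH hφ
  have hεX := epsX H X Y Z hH hφ
  have hεZ := epsZ H X Y Z hH hφ
  have hεY' := epsY' H X Y Z P Q R₀ hH hφ hφ'
  have hεX' := epsX' H X Y Z P Q R₀ hH hφ hφ'
  have hεZ' := epsZ' H X Y Z P Q R₀ hH hφ hφ'
  have haφ := aphi H X Y Z P Q R₀ hH hφ hφ'
  have haφ' := aphi' H X Y Z P Q R₀ hH hφ hφ'
  refine ⟨?_, ?_, ?_, ?_⟩
  · -- identity (1)
    have key1 : ∀ (i : ι) (j : ι'),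
        Vc H (((1:G) ⊗ₜ[k] (P j ⊗ₜ[k] (Q j ⊗ₜ[k] R₀ j))) *
            (X i ⊗ₜ[k] (Y i ⊗ₜ[k] H.Δ (Z i))))
        = ((X i * H.β * H.S (Y i)) ⊗ₜ[k] (1:G)) *
            ((H.S (P j) * H.α * Q j) ⊗ₜ[k] R₀ j) * H.Δ (Z i) := by
      intro i j
      generalize H.Δ (Z i) = t
      induction t using TensorProduct.induction_on with
      | zero => simp
      | tmul u v =>
          rw [Algebra.TensorProduct.tmul_mul_tmul,
            Algebra.TensorProduct.tmul_mul_tmul,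
            Algebra.TensorProduct.tmul_mul_tmul, Vc_tmul,
            Algebra.TensorProduct.tmul_mul_tmul,
            Algebra.TensorProduct.tmul_mul_tmul]
          simp [hH.S_mul, mul_assoc]
      | add t t' ht ht' =>
          simp only [tmul_add, mul_add, map_add] at *; rw [ht, ht']
    have stepA : ∑ i : ι, ((X i * H.β * H.S (Y i)) ⊗ₜ[k] (1:G)) * qL * H.Δ (Z i)
        = Vc H (((1:G) ⊗ₜ[k] H.φ') * H.ooΔ H.φ) := by
      rw [eone', eooΔ, Finset.sum_mul_sum, map_sum, hqL]
      have hL : ∀ i : ι, ((X i * H.β * H.S (Y i)) ⊗ₜ[k] (1:G)) *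
            (∑ j : ι', (H.S (P j) * H.α * Q j) ⊗ₜ[k] R₀ j) * H.Δ (Z i)
          = ∑ j : ι', ((X i * H.β * H.S (Y i)) ⊗ₜ[k] (1:G)) *
              ((H.S (P j) * H.α * Q j) ⊗ₜ[k] R₀ j) * H.Δ (Z i) := by
        intro i; rw [Finset.mul_sum, Finset.sum_mul]
      rw [Finset.sum_congr rfl fun i _ => hL i, Finset.sum_comm]
      apply Finset.sum_congr rfl
      intro j _
      rw [map_sum]
      exact Finset.sum_congr rfl fun i _ => (key1 i j).symm
    have stepC : Vc H ((H.oΔo H.φ * padRHom H.φ) * H.Δoo H.φ')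
        = Vc H (H.oΔo H.φ * padRHom H.φ) := by
      set w := H.oΔo H.φ * padRHom H.φ with hw
      rw [eΔoo', Finset.mul_sum, map_sum]
      have hterm : ∀ j : ι',
          Vc H (w * (Algebra.TensorProduct.assoc k k k G G (G ⊗[k] G))
            (H.Δ (P j) ⊗ₜ[k] (Q j ⊗ₜ[k] R₀ j)))
          = H.ε (P j) • Vc H
              (w * ((1:G) ⊗ₜ[k] ((1:G) ⊗ₜ[k] (Q j ⊗ₜ[k] R₀ j)))) := by
        intro j
        rw [splitA4, ← mul_assoc, fuseV H hH]
      rw [Finset.sum_congr rfl fun j _ => hterm j]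
      have hcollect : ∑ j : ι', H.ε (P j) • Vc H
            (w * ((1:G) ⊗ₜ[k] ((1:G) ⊗ₜ[k] (Q j ⊗ₜ[k] R₀ j))))
          = Vc H (w * ((1:G) ⊗ₜ[k] ((1:G) ⊗ₜ[k]
              (∑ j : ι', H.ε (P j) • (Q j ⊗ₜ[k] R₀ j))))) := by
        rw [tmul_sum, tmul_sum, Finset.mul_sum, map_sum]
        apply Finset.sum_congr rfl
        intro j _
        rw [tmul_smul, tmul_smul, mul_smul_comm, map_smul]
      rw [hcollect, hεX']
      rw [show ((1:G) ⊗ₜ[k] ((1:G) ⊗ₜ[k] (1 : G ⊗[k] G)))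
          = (1 : G ⊗[k] (G ⊗[k] (G ⊗[k] G))) by
        rw [← Algebra.TensorProduct.one_def, ← Algebra.TensorProduct.one_def]]
      rw [mul_one]
    have stepD : Vc H (H.oΔo H.φ * padRHom H.φ) = (1:G) ⊗ₜ[k] (1:G) := by
      rw [eoΔo, epadR, Finset.sum_mul_sum, map_sum]
      have key : ∀ (i j : ι),
          Vc H ((X i ⊗ₜ[k] ((Algebra.TensorProduct.assoc k k k G G G)
              (H.Δ (Y i) ⊗ₜ[k] Z i))) *
            (X j ⊗ₜ[k] (Y j ⊗ₜ[k] (Z j ⊗ₜ[k] (1:G)))))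
          = H.ε (Y i) • ((X i * (X j * H.β * (H.S (Y j) * H.α * Z j)))
              ⊗ₜ[k] Z i) := by
        intro i j
        have key2 : ∀ t : G ⊗[k] G,
            Vc H ((X i ⊗ₜ[k] ((Algebra.TensorProduct.assoc k k k G G G)
                (t ⊗ₜ[k] Z i))) *
              (X j ⊗ₜ[k] (Y j ⊗ₜ[k] (Z j ⊗ₜ[k] (1:G)))))
            = ((X i * X j) * H.β * (H.S (Y j) * (AL H t * Z j))) ⊗ₜ[k] Z i := by
          intro t
          induction t using TensorProduct.induction_on with
          | zero => simp
          | tmul x y =>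
              rw [Algebra.TensorProduct.assoc_tmul,
                Algebra.TensorProduct.tmul_mul_tmul,
                Algebra.TensorProduct.tmul_mul_tmul,
                Algebra.TensorProduct.tmul_mul_tmul, Vc_tmul, AL_tmul]
              simp [hH.S_mul, mul_assoc]
          | add t t' ht ht' =>
              simp only [add_tmul, map_add, tmul_add, mul_add, add_mul] at *
              rw [ht, ht']
        rw [key2 (H.Δ (Y i)), AL_Δ H hH]
        simp [mul_smul_comm, smul_mul_assoc, smul_tmul', mul_assoc]
      have h1 : ∀ i : ι, Vc H (∑ j : ι,
            (X i ⊗ₜ[k] ((Algebra.TensorProduct.assoc k k k G G G)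
              (H.Δ (Y i) ⊗ₜ[k] Z i))) *
              (X j ⊗ₜ[k] (Y j ⊗ₜ[k] (Z j ⊗ₜ[k] (1:G)))))
          = H.ε (Y i) • (X i ⊗ₜ[k] Z i) := by
        intro i
        rw [map_sum, Finset.sum_congr rfl fun j _ => key i j, ← Finset.smul_sum]
        congr 1
        rw [← sum_tmul, ← Finset.mul_sum, haφ, mul_one]
      rw [Finset.sum_congr rfl fun i _ => h1 i, hεY,
        Algebra.TensorProduct.one_def]
    calc ∑ i : ι, (H.S (Y i * H.S.symm (X i * H.β)) ⊗ₜ[k] (1:G)) * qL * H.Δ (Z i)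
        = ∑ i : ι, ((X i * H.β * H.S (Y i)) ⊗ₜ[k] (1:G)) * qL * H.Δ (Z i) := by
          apply Finset.sum_congr rfl
          intro i _
          rw [hH.S_mul, LinearEquiv.apply_symm_apply]
      _ = Vc H (((1:G) ⊗ₜ[k] H.φ') * H.ooΔ H.φ) := stepA
      _ = Vc H ((H.oΔo H.φ * padRHom H.φ) * H.Δoo H.φ') := by
          rw [R1 H hH, mul_assoc]
      _ = (1:G) ⊗ₜ[k] (1:G) := by rw [stepC, stepD]
  · -- identity (2)
    have key1 : ∀ (i : ι) (j : ι'),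
        Uc H ((X i ⊗ₜ[k] (Y i ⊗ₜ[k] (Z i ⊗ₜ[k] (1:G)))) *
            (Algebra.TensorProduct.assoc k k k G G (G ⊗[k] G))
              (H.Δ (P j) ⊗ₜ[k] (Q j ⊗ₜ[k] R₀ j)))
        = ((1:G) ⊗ₜ[k] H.S.symm (Q j * H.β * H.S (R₀ j))) *
            (X i ⊗ₜ[k] (H.S.symm (H.α * Z i) * Y i)) * H.Δ (P j) := by
      intro i j
      generalize H.Δ (P j) = t
      induction t using TensorProduct.induction_on with
      | zero => simp
      | tmul u v =>
          rw [Algebra.TensorProduct.assoc_tmul,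
            Algebra.TensorProduct.tmul_mul_tmul,
            Algebra.TensorProduct.tmul_mul_tmul,
            Algebra.TensorProduct.tmul_mul_tmul, Uc_tmul,
            Algebra.TensorProduct.tmul_mul_tmul,
            Algebra.TensorProduct.tmul_mul_tmul]
          simp [hH.S_mul, Ssymm_mul H hH, mul_assoc]
      | add t t' ht ht' =>
          simp only [add_tmul, map_add, mul_add, add_mul] at *; rw [ht, ht']
    have stepA : ∑ j : ι', ((1:G) ⊗ₜ[k] H.S.symm (Q j * H.β * H.S (R₀ j))) *
          qR * H.Δ (P j)
        = Uc H (padRHom H.φ * H.Δoo H.φ') := by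
      rw [epadR, eΔoo', Finset.sum_mul_sum, map_sum, hqR]
      have hL : ∀ j : ι', ((1:G) ⊗ₜ[k] H.S.symm (Q j * H.β * H.S (R₀ j))) *
            (∑ i : ι, X i ⊗ₜ[k] (H.S.symm (H.α * Z i) * Y i)) * H.Δ (P j)
          = ∑ i : ι, ((1:G) ⊗ₜ[k] H.S.symm (Q j * H.β * H.S (R₀ j))) *
              (X i ⊗ₜ[k] (H.S.symm (H.α * Z i) * Y i)) * H.Δ (P j) := by
        intro j; rw [Finset.mul_sum, Finset.sum_mul]
      rw [Finset.sum_congr rfl fun j _ => hL j, Finset.sum_comm]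
      apply Finset.sum_congr rfl
      intro i _
      rw [map_sum]
      exact Finset.sum_congr rfl fun j _ => (key1 i j).symm
    have stepC : Uc H ((H.oΔo H.φ' * ((1:G) ⊗ₜ[k] H.φ')) * H.ooΔ H.φ)
        = Uc H (H.oΔo H.φ' * ((1:G) ⊗ₜ[k] H.φ')) := by
      set w := H.oΔo H.φ' * ((1:G) ⊗ₜ[k] H.φ') with hw
      rw [eooΔ, Finset.mul_sum, map_sum]
      have hterm : ∀ i : ι,
          Uc H (w * (X i ⊗ₜ[k] (Y i ⊗ₜ[k] H.Δ (Z i))))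
          = H.ε (Z i) • Uc H (w * E4 (X i ⊗ₜ[k] Y i)) := by
        intro i
        have hsplit : (X i ⊗ₜ[k] (Y i ⊗ₜ[k] H.Δ (Z i)))
            = (E4 (X i ⊗ₜ[k] Y i)) * ((1:G) ⊗ₜ[k] ((1:G) ⊗ₜ[k] H.Δ (Z i))) := by
          rw [E4_tmul, Algebra.TensorProduct.tmul_mul_tmul,
            Algebra.TensorProduct.tmul_mul_tmul, mul_one, mul_one, one_mul]
        rw [hsplit, ← mul_assoc, fuseU H hH]
      rw [Finset.sum_congr rfl fun i _ => hterm i]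
      have hcollect : ∑ i : ι, H.ε (Z i) • Uc H (w * E4 (X i ⊗ₜ[k] Y i))
          = Uc H (w * E4 (∑ i : ι, H.ε (Z i) • (X i ⊗ₜ[k] Y i))) := by
        rw [map_sum, Finset.mul_sum, map_sum]
        exact Finset.sum_congr rfl fun i _ => by
          rw [map_smul, mul_smul_comm, map_smul]
      rw [hcollect, hεZ, map_one, mul_one]
    have stepD : Uc H (H.oΔo H.φ' * ((1:G) ⊗ₜ[k] H.φ'))
        = (1:G) ⊗ₜ[k] (1:G) := by
      rw [eoΔo', eone', Finset.sum_mul_sum, map_sum]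
      have key : ∀ (i j : ι'),
          Uc H ((P i ⊗ₜ[k] ((Algebra.TensorProduct.assoc k k k G G G)
              (H.Δ (Q i) ⊗ₜ[k] R₀ i))) *
            ((1:G) ⊗ₜ[k] (P j ⊗ₜ[k] (Q j ⊗ₜ[k] R₀ j))))
          = H.ε (Q i) • ((P i ⊗ₜ[k] R₀ i) * ((1:G) ⊗ₜ[k]
              (H.S.symm (Q j * H.β * H.S (R₀ j)) * (H.S.symm H.α * P j)))) := by
        intro i j
        have key2 : ∀ t : G ⊗[k] G,
            Uc H ((P i ⊗ₜ[k] ((Algebra.TensorProduct.assoc k k k G G G)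
                (t ⊗ₜ[k] R₀ i))) *
              ((1:G) ⊗ₜ[k] (P j ⊗ₜ[k] (Q j ⊗ₜ[k] R₀ j))))
            = P i ⊗ₜ[k] (R₀ i * (H.S.symm (Q j * H.β * H.S (R₀ j)) *
                (N1 H t * P j))) := by
          intro t
          induction t using TensorProduct.induction_on with
          | zero => simp
          | tmul x y =>
              rw [Algebra.TensorProduct.assoc_tmul,
                Algebra.TensorProduct.tmul_mul_tmul,
                Algebra.TensorProduct.tmul_mul_tmul,
                Algebra.TensorProduct.tmul_mul_tmul, Uc_tmul, N1_tmul]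
              simp [hH.S_mul, Ssymm_mul H hH, mul_assoc]
          | add t t' ht ht' =>
              simp only [add_tmul, map_add, tmul_add, mul_add, add_mul] at *
              rw [ht, ht']
        rw [key2 (H.Δ (Q i)), N1_Δ H hH, Algebra.TensorProduct.tmul_mul_tmul]
        simp [mul_smul_comm, smul_mul_assoc, tmul_smul, mul_assoc]
      have h1 : ∀ i : ι', Uc H (∑ j : ι',
            (P i ⊗ₜ[k] ((Algebra.TensorProduct.assoc k k k G G G)
              (H.Δ (Q i) ⊗ₜ[k] R₀ i))) *
              ((1:G) ⊗ₜ[k] (P j ⊗ₜ[k] (Q j ⊗ₜ[k] R₀ j))))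
          = ∑ j : ι', H.ε (Q i) • ((P i ⊗ₜ[k] R₀ i) * ((1:G) ⊗ₜ[k]
              (H.S.symm (Q j * H.β * H.S (R₀ j)) * (H.S.symm H.α * P j)))) := by
        intro i
        rw [map_sum]
        exact Finset.sum_congr rfl fun j _ => key i j
      rw [Finset.sum_congr rfl fun i _ => h1 i, Finset.sum_comm]
      have h2 : ∀ j : ι', ∑ i : ι', H.ε (Q i) • ((P i ⊗ₜ[k] R₀ i) *
            ((1:G) ⊗ₜ[k] (H.S.symm (Q j * H.β * H.S (R₀ j)) *
              (H.S.symm H.α * P j))))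
          = (1:G) ⊗ₜ[k] (H.S.symm (Q j * H.β * H.S (R₀ j)) *
              (H.S.symm H.α * P j)) := by
        intro j
        rw [show ∀ c : G ⊗[k] G, ∑ i : ι', H.ε (Q i) • ((P i ⊗ₜ[k] R₀ i) * c)
            = (∑ i : ι', H.ε (Q i) • (P i ⊗ₜ[k] R₀ i)) * c from fun c => by
          rw [Finset.sum_mul]
          exact Finset.sum_congr rfl fun i _ => (smul_mul_assoc _ _ _).symm]
        rw [hεY', one_mul]
      rw [Finset.sum_congr rfl fun j _ => h2 j, ← tmul_sum]
      have hfin : ∑ j : ι', H.S.symm (Q j * H.β * H.S (R₀ j)) *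
            (H.S.symm H.α * P j) = 1 := by
        apply H.S.injective
        rw [map_sum, hH.S_one, ← haφ']
        apply Finset.sum_congr rfl
        intro j _
        simp [hH.S_mul, mul_assoc]
      rw [hfin]
    calc ∑ j : ι', ((1:G) ⊗ₜ[k] H.S.symm (Q j * H.β * H.S (R₀ j))) * qR *
          H.Δ (P j)
        = Uc H (padRHom H.φ * H.Δoo H.φ') := stepA
      _ = Uc H ((H.oΔo H.φ' * ((1:G) ⊗ₜ[k] H.φ')) * H.ooΔ H.φ) := by
          rw [R2 H hH, mul_assoc]
      _ = (1:G) ⊗ₜ[k] (1:G) := by rw [stepC, stepD]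
  · -- identity (3)
    have key1 : ∀ (j : ι') (i : ι),
        Tc H ((P j ⊗ₜ[k] (Q j ⊗ₜ[k] H.Δ (R₀ j))) *
            ((1:G) ⊗ₜ[k] (X i ⊗ₜ[k] (Y i ⊗ₜ[k] Z i))))
        = H.Δ (R₀ j) * ((Y i * H.S.symm (X i * H.β)) ⊗ₜ[k] Z i) *
            (H.S.symm (H.S (P j) * H.α * Q j) ⊗ₜ[k] (1:G)) := by
      intro j i
      generalize H.Δ (R₀ j) = t
      induction t using TensorProduct.induction_on with
      | zero => simp
      | tmul u v =>
          rw [Algebra.TensorProduct.tmul_mul_tmul,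
            Algebra.TensorProduct.tmul_mul_tmul,
            Algebra.TensorProduct.tmul_mul_tmul, Tc_tmul,
            Algebra.TensorProduct.tmul_mul_tmul,
            Algebra.TensorProduct.tmul_mul_tmul]
          simp [hH.S_mul, Ssymm_mul H hH, mul_assoc]
      | add t t' ht ht' =>
          simp only [tmul_add, mul_add, add_mul, map_add] at *; rw [ht, ht']
    have stepA : ∑ j : ι', H.Δ (R₀ j) * pL *
          (H.S.symm (H.S (P j) * H.α * Q j) ⊗ₜ[k] (1:G))
        = Tc H (H.ooΔ H.φ' * ((1:G) ⊗ₜ[k] H.φ)) := by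
      rw [eooΔ', eone, Finset.sum_mul_sum, map_sum, hpL]
      apply Finset.sum_congr rfl
      intro j _
      rw [map_sum, Finset.mul_sum, Finset.sum_mul]
      exact Finset.sum_congr rfl fun i _ => (key1 j i).symm
    have stepC : Tc H (H.Δoo H.φ * (padRHom H.φ' * H.oΔo H.φ'))
        = Tc H (padRHom H.φ' * H.oΔo H.φ') := by
      set w := padRHom H.φ' * H.oΔo H.φ' with hw
      rw [eΔoo, Finset.sum_mul, map_sum]
      have hterm : ∀ i : ι,
          Tc H ((Algebra.TensorProduct.assoc k k k G G (G ⊗[k] G))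
              (H.Δ (X i) ⊗ₜ[k] (Y i ⊗ₜ[k] Z i)) * w)
          = H.ε (X i) • ((Y i ⊗ₜ[k] Z i) * Tc H w) := by
        intro i
        rw [splitA4, mul_assoc, TcmulL, fuseT H hH, mul_smul_comm]
      rw [Finset.sum_congr rfl fun i _ => hterm i]
      have hcollect : ∑ i : ι, H.ε (X i) • ((Y i ⊗ₜ[k] Z i) * Tc H w)
          = (∑ i : ι, H.ε (X i) • (Y i ⊗ₜ[k] Z i)) * Tc H w := by
        rw [Finset.sum_mul]
        exact Finset.sum_congr rfl fun i _ => (smul_mul_assoc _ _ _).symm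
      rw [hcollect, hεX, one_mul]
    have stepD : Tc H (padRHom H.φ' * H.oΔo H.φ') = (1:G) ⊗ₜ[k] (1:G) := by
      rw [epadR', eoΔo', Finset.sum_mul_sum, map_sum]
      have key : ∀ (i j : ι'),
          Tc H ((P i ⊗ₜ[k] (Q i ⊗ₜ[k] (R₀ i ⊗ₜ[k] (1:G)))) *
            (P j ⊗ₜ[k] ((Algebra.TensorProduct.assoc k k k G G G)
              (H.Δ (Q j) ⊗ₜ[k] R₀ j))))
          = H.ε (Q j) • (((R₀ i * (H.S.symm H.β *
              (H.S.symm (H.α * Q i) * P i))) ⊗ₜ[k] (1:G)) *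
                (P j ⊗ₜ[k] R₀ j)) := by
        intro i j
        have key2 : ∀ t : G ⊗[k] G,
            Tc H ((P i ⊗ₜ[k] (Q i ⊗ₜ[k] (R₀ i ⊗ₜ[k] (1:G)))) *
              (P j ⊗ₜ[k] ((Algebra.TensorProduct.assoc k k k G G G)
                (t ⊗ₜ[k] R₀ j))))
            = (R₀ i * (N2 H t * (H.S.symm (H.α * Q i) * (P i * P j))))
                ⊗ₜ[k] R₀ j := by
          intro t
          induction t using TensorProduct.induction_on with
          | zero => simp
          | tmul x y =>
              rw [Algebra.TensorProduct.assoc_tmul,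
                Algebra.TensorProduct.tmul_mul_tmul,
                Algebra.TensorProduct.tmul_mul_tmul,
                Algebra.TensorProduct.tmul_mul_tmul, Tc_tmul, N2_tmul]
              simp [hH.S_mul, Ssymm_mul H hH, mul_assoc]
          | add t t' ht ht' =>
              simp only [add_tmul, map_add, tmul_add, mul_add, add_mul] at *
              rw [ht, ht']
        rw [key2 (H.Δ (Q j)), N2_Δ H hH, Algebra.TensorProduct.tmul_mul_tmul]
        simp [mul_smul_comm, smul_mul_assoc, smul_tmul', tmul_smul, mul_assoc]
      have h1 : ∀ i : ι', Tc H (∑ j : ι',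
            (P i ⊗ₜ[k] (Q i ⊗ₜ[k] (R₀ i ⊗ₜ[k] (1:G)))) *
              (P j ⊗ₜ[k] ((Algebra.TensorProduct.assoc k k k G G G)
                (H.Δ (Q j) ⊗ₜ[k] R₀ j))))
          = (R₀ i * (H.S.symm H.β * (H.S.symm (H.α * Q i) * P i)))
              ⊗ₜ[k] (1:G) := by
        intro i
        rw [map_sum, Finset.sum_congr rfl fun j _ => key i j]
        rw [show ∀ c : G ⊗[k] G, ∑ j : ι', H.ε (Q j) • (c * (P j ⊗ₜ[k] R₀ j))
            = c * (∑ j : ι', H.ε (Q j) • (P j ⊗ₜ[k] R₀ j)) from fun c => by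
          rw [Finset.mul_sum]
          exact Finset.sum_congr rfl fun j _ => (mul_smul_comm _ _ _).symm]
        rw [hεY', mul_one]
      rw [Finset.sum_congr rfl fun i _ => h1 i, ← sum_tmul]
      have hfin : ∑ i : ι', R₀ i * (H.S.symm H.β *
            (H.S.symm (H.α * Q i) * P i)) = 1 := by
        apply H.S.injective
        rw [map_sum, hH.S_one, ← haφ']
        apply Finset.sum_congr rfl
        intro i _
        simp [hH.S_mul, mul_assoc]
      rw [hfin]
    calc ∑ j : ι', H.Δ (R₀ j) * pL *
          (H.S.symm (H.S (P j) * H.α * Q j) ⊗ₜ[k] (1:G))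
        = Tc H (H.ooΔ H.φ' * ((1:G) ⊗ₜ[k] H.φ)) := stepA
      _ = Tc H (H.Δoo H.φ * (padRHom H.φ' * H.oΔo H.φ')) := by rw [R3 H hH]
      _ = (1:G) ⊗ₜ[k] (1:G) := by rw [stepC, stepD]
  -- identity (4)
  · have expand : ∀ (i : ι) (j : ι'),
        Wc H ((Algebra.TensorProduct.assoc k k k G G (G ⊗[k] G))
            (H.Δ (X i) ⊗ₜ[k] (Y i ⊗ₜ[k] Z i)) *
          (P j ⊗ₜ[k] (Q j ⊗ₜ[k] (R₀ j ⊗ₜ[k] (1:G)))))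
        = H.Δ (X i) * (P j ⊗ₜ[k] (Q j * H.β * H.S (R₀ j))) *
            ((1:G) ⊗ₜ[k] (H.S (Y i) * (H.α * Z i))) := by
      intro i j
      generalize H.Δ (X i) = t
      induction t using TensorProduct.induction_on with
      | zero => simp
      | tmul u v =>
          rw [Algebra.TensorProduct.assoc_tmul,
            Algebra.TensorProduct.tmul_mul_tmul,
            Algebra.TensorProduct.tmul_mul_tmul,
            Algebra.TensorProduct.tmul_mul_tmul, Wc_tmul,
            Algebra.TensorProduct.tmul_mul_tmul,
            Algebra.TensorProduct.tmul_mul_tmul]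
          simp [hH.S_mul, mul_assoc]
      | add t t' ht ht' =>
          simp only [add_tmul, map_add, add_mul] at *; rw [ht, ht']
    have stepA : ∑ i : ι, H.Δ (X i) * pR *
          ((1:G) ⊗ₜ[k] (H.S (Y i) * (H.α * Z i)))
        = Wc H (H.Δoo H.φ * padRHom H.φ') := by
      rw [eΔoo, epadR', Finset.sum_mul_sum, map_sum]
      apply Finset.sum_congr rfl
      intro i _
      rw [map_sum, hpR, Finset.mul_sum, Finset.sum_mul]
      exact Finset.sum_congr rfl fun j _ => (expand i j).symm
    have stepC : Wc H (H.ooΔ H.φ' * (((1:G) ⊗ₜ[k] H.φ) * H.oΔo H.φ))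
        = Wc H (((1:G) ⊗ₜ[k] H.φ) * H.oΔo H.φ) := by
      set u := ((1:G) ⊗ₜ[k] H.φ) * H.oΔo H.φ with hu
      rw [eooΔ', Finset.sum_mul, map_sum]
      have hterm : ∀ j : ι', Wc H ((P j ⊗ₜ[k] (Q j ⊗ₜ[k] H.Δ (R₀ j))) * u)
          = H.ε (R₀ j) • Wc H ((E4 (P j ⊗ₜ[k] Q j)) * u) := by
        intro j
        have hsplit : (P j ⊗ₜ[k] (Q j ⊗ₜ[k] H.Δ (R₀ j)))
            = ((1:G) ⊗ₜ[k] ((1:G) ⊗ₜ[k] H.Δ (R₀ j))) * (E4 (P j ⊗ₜ[k] Q j)) := by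
          rw [E4_tmul, Algebra.TensorProduct.tmul_mul_tmul,
            Algebra.TensorProduct.tmul_mul_tmul, one_mul, one_mul, mul_one]
        rw [hsplit, mul_assoc, fuseW H hH]
      rw [Finset.sum_congr rfl fun j _ => hterm j]
      have hcollect : ∑ j : ι', H.ε (R₀ j) • Wc H ((E4 (P j ⊗ₜ[k] Q j)) * u)
          = Wc H ((E4 (∑ j : ι', H.ε (R₀ j) • (P j ⊗ₜ[k] Q j))) * u) := by
        rw [map_sum, Finset.sum_mul, map_sum]
        exact Finset.sum_congr rfl fun j _ => by
          rw [map_smul, smul_mul_assoc, map_smul]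
      rw [hcollect, hεZ', map_one, one_mul]
    have stepD : Wc H (((1:G) ⊗ₜ[k] H.φ) * H.oΔo H.φ)
        = (1:G) ⊗ₜ[k] (1:G) := by
      rw [eone, eoΔo, Finset.sum_mul_sum, map_sum]
      have key : ∀ (j i : ι),
          Wc H (((1:G) ⊗ₜ[k] (X j ⊗ₜ[k] (Y j ⊗ₜ[k] Z j))) *
            (X i ⊗ₜ[k] ((Algebra.TensorProduct.assoc k k k G G G)
              (H.Δ (Y i) ⊗ₜ[k] Z i))))
          = H.ε (Y i) • (X i ⊗ₜ[k]
              ((X j * H.β * (H.S (Y j) * H.α * Z j)) * Z i)) := by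
        intro j i
        have key2 : ∀ t : G ⊗[k] G,
            Wc H (((1:G) ⊗ₜ[k] (X j ⊗ₜ[k] (Y j ⊗ₜ[k] Z j))) *
              (X i ⊗ₜ[k] ((Algebra.TensorProduct.assoc k k k G G G) (t ⊗ₜ[k] Z i))))
            = X i ⊗ₜ[k] (X j * BR H t * (H.S (Y j) * H.α * (Z j * Z i))) := by
          intro t
          induction t using TensorProduct.induction_on with
          | zero => simp
          | tmul x y =>
              rw [Algebra.TensorProduct.assoc_tmul,
                Algebra.TensorProduct.tmul_mul_tmul,
                Algebra.TensorProduct.tmul_mul_tmul,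
                Algebra.TensorProduct.tmul_mul_tmul, one_mul, Wc_tmul, BR_tmul]
              simp [hH.S_mul, mul_assoc]
          | add t t' ht ht' =>
              simp only [add_tmul, map_add, mul_add, tmul_add, add_mul] at *
              rw [ht, ht']
        rw [key2 (H.Δ (Y i)), BR_Δ H hH]
        simp [mul_smul_comm, smul_mul_assoc, tmul_smul, mul_assoc]
      have h1 : ∀ j : ι, Wc H (∑ i : ι,
            ((1:G) ⊗ₜ[k] (X j ⊗ₜ[k] (Y j ⊗ₜ[k] Z j))) *
              (X i ⊗ₜ[k] ((Algebra.TensorProduct.assoc k k k G G G)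
                (H.Δ (Y i) ⊗ₜ[k] Z i))))
          = ∑ i : ι, H.ε (Y i) • (X i ⊗ₜ[k]
              ((X j * H.β * (H.S (Y j) * H.α * Z j)) * Z i)) := by
        intro j
        rw [map_sum]
        exact Finset.sum_congr rfl fun i _ => key j i
      rw [Finset.sum_congr rfl fun j _ => h1 j]
      rw [Finset.sum_comm]
      have : ∀ i : ι, ∑ j : ι, H.ε (Y i) • (X i ⊗ₜ[k]
            ((X j * H.β * (H.S (Y j) * H.α * Z j)) * Z i))
          = H.ε (Y i) • (X i ⊗ₜ[k] Z i) := by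
        intro i
        rw [← Finset.smul_sum, ← tmul_sum, ← Finset.sum_mul, haφ, one_mul]
      rw [Finset.sum_congr rfl fun i _ => this i, hεY,
        Algebra.TensorProduct.one_def]
    calc ∑ i : ι, H.Δ (X i) * pR *
          ((1:G) ⊗ₜ[k] H.S (H.S.symm (H.α * Z i) * Y i))
        = ∑ i : ι, H.Δ (X i) * pR *
          ((1:G) ⊗ₜ[k] (H.S (Y i) * (H.α * Z i))) := by
          apply Finset.sum_congr rfl
          intro i _
          rw [hH.S_mul, LinearEquiv.apply_symm_apply]
      _ = Wc H (H.Δoo H.φ * padRHom H.φ') := stepA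
      _ = Wc H (H.ooΔ H.φ' * (((1:G) ⊗ₜ[k] H.φ) * H.oΔo H.φ)) := by
          rw [R4 H hH]
      _ = (1:G) ⊗ₜ[k] (1:G) := by rw [stepC, stepD]
end
end

section
/- Let (G,Δ,ε,φ,S,α,β) be a finite-dimensional quasi-Hopf algebra over a field k with invertible antipode S, and define p_λ := Yⁱ·S⁻¹(Xⁱ·β) ⊗ Zⁱ, p_ρ := Pⁱ ⊗ Qⁱ·β·S(Rⁱ), q_λ := S(Pⁱ)·α·Qⁱ ⊗ Rⁱ, q_ρ := Xⁱ ⊗ S⁻¹(α·Zⁱ)·Yⁱ, where φ = Xⁱ⊗Yⁱ⊗Zⁱ and φ⁻¹ = Pⁱ⊗Qⁱ⊗Rⁱ (implicit summation). Then for all a ∈ G (with Sweedler notation Δ(a)=a₍₁₎⊗a₍₂₎): (1) Δ(a₍₂₎)·p_λ·[S⁻¹(a₍₁₎)⊗1] = p_λ·[1⊗a]; (2) Δ(a₍₁₎)·p_ρ·[1⊗S(a₍₂₎)] = p_ρ·[a⊗1]; (3) [S(a₍₁₎)⊗1]·q_λ·Δ(a₍₂₎) = [1⊗a]·q_λ;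 (4) [1⊗S⁻¹(a₍₂₎)]·q_ρ·Δ(a₍₁₎) = [a⊗1]·q_ρ. -/
open TensorProduct

set_option maxSynthPendingDepth 8
set_option synthInstance.maxHeartbeats 1000000
set_option maxHeartbeats 1000000

noncomputable section

/-!
Each identity is the image of the quasi-coassociativity relation
`(id ⊗ Δ)Δ(a) · φ = φ · (Δ ⊗ id)Δ(a)` (or of its conjugate by `φ⁻¹`) under a linear map
`G ⊗ G ⊗ G → G ⊗ G` that sends `φ` (resp. `φ⁻¹`) to the element in question. For `p_λ` this is
`x ⊗ y ⊗ z ↦ y S⁻¹(xβ) ⊗ z`: on the left-hand side, anti-multiplicativity of `S⁻¹` moves `a₍₁₎`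
out as `S⁻¹(a₍₁₎)` on the right; on the right-hand side, `a₍₁₎` meets `β` in the combination
`a₍₁₎₍₁₎ β S(a₍₁₎₍₂₎) = ε(a₍₁₎) β`, and the counit leaves `p_λ (1 ⊗ a)`.
-/

namespace QHA.QuasiHopfData

variable {k G : Type} [Field k] [Ring G] [Algebra k G] (H : QuasiHopfData k G)

lemma ΔR_eq_map_Δ (a : G) :
    H.ΔR a = Algebra.TensorProduct.map (AlgHom.id k G) H.Δ (H.Δ a) := rfl

lemma ΔL_eq_assoc_map_Δ (a : G) : H.ΔL a = Algebra.TensorProduct.assoc k k k G G G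
    (Algebra.TensorProduct.map H.Δ (AlgHom.id k G) (H.Δ a)) := rfl

section Sweedler

variable {H} {a : G} {κ : Type} [Fintype κ] {a1 a2 : κ → G}

lemma ΔR_eq_sum (hΔ : H.Δ a = ∑ m : κ, a1 m ⊗ₜ[k] a2 m) :
    H.ΔR a = ∑ m : κ, a1 m ⊗ₜ[k] H.Δ (a2 m) := by
  simp [ΔR, hΔ]

lemma ΔL_eq_sum (hΔ : H.Δ a = ∑ m : κ, a1 m ⊗ₜ[k] a2 m) :
    H.ΔL a = ∑ m : κ, Algebra.TensorProduct.assoc k k k G G G (H.Δ (a1 m) ⊗ₜ a2 m) := by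
  simp [ΔL, hΔ]

end Sweedler

def βContract : G ⊗[k] G →ₗ[k] G :=
  LinearMap.mul' k G ∘ₗ TensorProduct.map (LinearMap.mulRight k H.β) H.S.toLinearMap

@[simp] lemma βContract_tmul (c d : G) : H.βContract (c ⊗ₜ d) = c * H.β * H.S d := rfl

def αContract : G ⊗[k] G →ₗ[k] G :=
  LinearMap.mul' k G ∘ₗ TensorProduct.map (LinearMap.mulRight k H.α ∘ₗ H.S.toLinearMap) .id

@[simp] lemma αContract_tmul (c d : G) : H.αContract (c ⊗ₜ d) = H.S c * H.α * d := rfl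

/-- `x ⊗ y ⊗ z ↦ y S⁻¹(xβ) ⊗ z`, so that `p_λ = pLMap φ`. -/
def pLMap : G ⊗[k] (G ⊗[k] G) →ₗ[k] G ⊗[k] G :=
  TensorProduct.lift <| (LinearMap.mul k (G ⊗[k] G)).flip ∘ₗ
    (Algebra.TensorProduct.includeLeft : G →ₐ[k] G ⊗[k] G).toLinearMap ∘ₗ
    H.S.symm.toLinearMap ∘ₗ LinearMap.mulRight k H.β

@[simp] lemma pLMap_tmul (x : G) (w : G ⊗[k] G) :
    H.pLMap (x ⊗ₜ w) = w * (H.S.symm (x * H.β) ⊗ₜ 1) := rfl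

/-- `x ⊗ y ⊗ z ↦ x ⊗ yβS(z)`, so that `p_ρ = pRMap φ⁻¹`. -/
def pRMap : G ⊗[k] (G ⊗[k] G) →ₗ[k] G ⊗[k] G :=
  TensorProduct.lift ((LinearMap.mul k (G ⊗[k] G)).flip ∘ₗ
      (Algebra.TensorProduct.includeRight : G →ₐ[k] G ⊗[k] G).toLinearMap ∘ₗ
      LinearMap.mulLeft k H.β ∘ₗ H.S.toLinearMap).flip ∘ₗ
    (Algebra.TensorProduct.assoc k k k G G G).symm.toLinearMap

@[simp] lemma pRMap_assoc_tmul (v : G ⊗[k] G) (z : G) :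
    H.pRMap (Algebra.TensorProduct.assoc k k k G G G (v ⊗ₜ z)) = v * (1 ⊗ₜ (H.β * H.S z)) := by
  simp only [pRMap, LinearMap.comp_apply, AlgEquiv.toLinearMap_apply, AlgEquiv.symm_apply_apply]
  rfl

@[simp] lemma pRMap_tmul (x y z : G) :
    H.pRMap (x ⊗ₜ (y ⊗ₜ z)) = x ⊗ₜ (y * H.β * H.S z) := by
  simpa [Algebra.TensorProduct.tmul_mul_tmul, mul_assoc] using H.pRMap_assoc_tmul (x ⊗ₜ y) z

/-- `x ⊗ y ⊗ z ↦ S(x)αy ⊗ z`, so that `q_λ = qLMap φ⁻¹`. -/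
def qLMap : G ⊗[k] (G ⊗[k] G) →ₗ[k] G ⊗[k] G :=
  TensorProduct.lift <| LinearMap.mul k (G ⊗[k] G) ∘ₗ
    (Algebra.TensorProduct.includeLeft : G →ₐ[k] G ⊗[k] G).toLinearMap ∘ₗ
    LinearMap.mulRight k H.α ∘ₗ H.S.toLinearMap

@[simp] lemma qLMap_tmul (x : G) (w : G ⊗[k] G) :
    H.qLMap (x ⊗ₜ w) = (H.S x * H.α) ⊗ₜ 1 * w := rfl

/-- `x ⊗ y ⊗ z ↦ x ⊗ S⁻¹(αz)y`, so that `q_ρ = qRMap φ`. -/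
def qRMap : G ⊗[k] (G ⊗[k] G) →ₗ[k] G ⊗[k] G :=
  TensorProduct.lift (LinearMap.mul k (G ⊗[k] G) ∘ₗ
      (Algebra.TensorProduct.includeRight : G →ₐ[k] G ⊗[k] G).toLinearMap ∘ₗ
      H.S.symm.toLinearMap ∘ₗ LinearMap.mulLeft k H.α).flip ∘ₗ
    (Algebra.TensorProduct.assoc k k k G G G).symm.toLinearMap

@[simp] lemma qRMap_assoc_tmul (v : G ⊗[k] G) (z : G) :
    H.qRMap (Algebra.TensorProduct.assoc k k k G G G (v ⊗ₜ z)) =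
      1 ⊗ₜ H.S.symm (H.α * z) * v := by
  simp only [qRMap, LinearMap.comp_apply, AlgEquiv.toLinearMap_apply, AlgEquiv.symm_apply_apply]
  rfl

@[simp] lemma qRMap_tmul (x y z : G) :
    H.qRMap (x ⊗ₜ (y ⊗ₜ z)) = x ⊗ₜ (H.S.symm (H.α * z) * y) := by
  simpa [Algebra.TensorProduct.tmul_mul_tmul] using H.qRMap_assoc_tmul (x ⊗ₜ y) z

namespace IsQuasiHopf

variable {H} (hH : H.IsQuasiHopf)
include hH

lemma S_symm_mul (a b : G) : H.S.symm (a * b) = H.S.symm b * H.S.symm a :=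
  H.S.injective <| by simp [hH.S_mul]

lemma ΔL_mul_φ' (a : G) : H.ΔL a * H.φ' = H.φ' * H.ΔR a :=
  calc H.ΔL a * H.φ' = H.φ' * (H.φ * H.ΔL a) * H.φ' := by
        rw [← mul_assoc H.φ', hH.φ_inv_mul, one_mul]
    _ = H.φ' * H.ΔR a := by rw [← hH.Δ_assoc, mul_assoc, mul_assoc, hH.φ_mul_inv, mul_one]

lemma pLMap_tmul_mul (u : G) (w : G ⊗[k] G) (t : G ⊗[k] (G ⊗[k] G)) :
    H.pLMap ((u ⊗ₜ w) * t) = w * H.pLMap t * (H.S.symm u ⊗ₜ 1) := by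
  suffices H.pLMap ∘ₗ LinearMap.mulLeft k (u ⊗ₜ w) =
      LinearMap.mulRight k (H.S.symm u ⊗ₜ[k] (1 : G)) ∘ₗ LinearMap.mulLeft k w ∘ₗ H.pLMap from
    LinearMap.congr_fun this t
  refine TensorProduct.ext_threefold' fun x y z => ?_
  simp [Algebra.TensorProduct.tmul_mul_tmul, hH.S_symm_mul, mul_assoc]

lemma pLMap_ΔR_mul {a : G} {κ : Type} [Fintype κ] {a1 a2 : κ → G}
    (hΔ : H.Δ a = ∑ m : κ, a1 m ⊗ₜ[k] a2 m) (t : G ⊗[k] (G ⊗[k] G)) :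
    H.pLMap (H.ΔR a * t) = ∑ m : κ, H.Δ (a2 m) * H.pLMap t * (H.S.symm (a1 m) ⊗ₜ 1) := by
  simp only [ΔR_eq_sum hΔ, Finset.sum_mul, map_sum, hH.pLMap_tmul_mul]

lemma pLMap_tmul_mul_assoc (x y z c : G) (w : G ⊗[k] G) :
    H.pLMap ((x ⊗ₜ (y ⊗ₜ z)) * Algebra.TensorProduct.assoc k k k G G G (w ⊗ₜ c)) =
      (y * H.S.symm (H.βContract w) * H.S.symm x) ⊗ₜ (z * c) := by
  induction w using TensorProduct.induction_on with
  | zero => simp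
  | tmul b₁ b₂ => simp [Algebra.TensorProduct.tmul_mul_tmul, hH.S_symm_mul, mul_assoc]
  | add w₁ w₂ h₁ h₂ => simp only [TensorProduct.add_tmul, map_add, mul_add, h₁, h₂, add_mul]

lemma pLMap_mul_ΔL (t : G ⊗[k] (G ⊗[k] G)) (a : G) :
    H.pLMap (t * H.ΔL a) = H.pLMap t * (1 ⊗ₜ a) := by
  suffices ∀ v : G ⊗[k] G, H.pLMap (t * Algebra.TensorProduct.assoc k k k G G G
      (Algebra.TensorProduct.map H.Δ (AlgHom.id k G) v)) = H.pLMap t * (1 ⊗ₜ H.κ1 G v) by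
    rw [ΔL_eq_assoc_map_Δ, this, hH.counit_left]
  intro v
  induction v using TensorProduct.induction_on with
  | zero => simp
  | tmul b c =>
    have hb : H.βContract (H.Δ b) = H.ε b • H.β := hH.antipode_right b
    suffices H.pLMap ∘ₗ LinearMap.mulRight k (Algebra.TensorProduct.assoc k k k G G G
        (H.Δ b ⊗ₜ c)) = LinearMap.mulRight k ((1 : G) ⊗ₜ[k] (H.ε b • c)) ∘ₗ H.pLMap by
      simpa [κ1] using LinearMap.congr_fun this t
    refine TensorProduct.ext_threefold' fun x y z => ?_
    simp [hH.pLMap_tmul_mul_assoc, hb, Algebra.TensorProduct.tmul_mul_tmul,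
      TensorProduct.smul_tmul', hH.S_symm_mul, mul_assoc]
  | add v₁ v₂ h₁ h₂ => simp only [map_add, mul_add, h₁, h₂, TensorProduct.tmul_add]

lemma pRMap_assoc_tmul_mul (w : G ⊗[k] G) (c : G) (t : G ⊗[k] (G ⊗[k] G)) :
    H.pRMap (Algebra.TensorProduct.assoc k k k G G G (w ⊗ₜ c) * t) =
      w * H.pRMap t * (1 ⊗ₜ H.S c) := by
  suffices H.pRMap ∘ₗ LinearMap.mulLeft k (Algebra.TensorProduct.assoc k k k G G G (w ⊗ₜ c)) =
      LinearMap.mulRight k ((1 : G) ⊗ₜ[k] H.S c) ∘ₗ LinearMap.mulLeft k w ∘ₗ H.pRMap from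
    LinearMap.congr_fun this t
  refine TensorProduct.ext_threefold' fun x y z => ?_
  have hxyz : x ⊗ₜ[k] (y ⊗ₜ[k] z) = Algebra.TensorProduct.assoc k k k G G G ((x ⊗ₜ y) ⊗ₜ z) :=
    rfl
  simp only [LinearMap.comp_apply, LinearMap.mulLeft_apply, LinearMap.mulRight_apply, hxyz,
    ← map_mul, Algebra.TensorProduct.tmul_mul_tmul, pRMap_assoc_tmul, hH.S_mul]
  simp [Algebra.TensorProduct.tmul_mul_tmul, mul_assoc]

lemma pRMap_ΔL_mul {a : G} {κ : Type} [Fintype κ] {a1 a2 : κ → G}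
    (hΔ : H.Δ a = ∑ m : κ, a1 m ⊗ₜ[k] a2 m) (t : G ⊗[k] (G ⊗[k] G)) :
    H.pRMap (H.ΔL a * t) = ∑ m : κ, H.Δ (a1 m) * H.pRMap t * (1 ⊗ₜ H.S (a2 m)) := by
  simp only [ΔL_eq_sum hΔ, Finset.sum_mul, map_sum, hH.pRMap_assoc_tmul_mul]

lemma pRMap_tmul_mul_tmul (x y z u : G) (w : G ⊗[k] G) :
    H.pRMap ((x ⊗ₜ (y ⊗ₜ z)) * (u ⊗ₜ w)) = (x * u) ⊗ₜ (y * H.βContract w * H.S z) := by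
  induction w using TensorProduct.induction_on with
  | zero => simp
  | tmul b₁ b₂ => simp [Algebra.TensorProduct.tmul_mul_tmul, hH.S_mul, mul_assoc]
  | add w₁ w₂ h₁ h₂ => simp only [TensorProduct.tmul_add, map_add, mul_add, h₁, h₂, add_mul]

lemma pRMap_mul_ΔR (t : G ⊗[k] (G ⊗[k] G)) (a : G) :
    H.pRMap (t * H.ΔR a) = H.pRMap t * (a ⊗ₜ 1) := by
  suffices ∀ v : G ⊗[k] G, H.pRMap (t * Algebra.TensorProduct.map (AlgHom.id k G) H.Δ v) =
      H.pRMap t * (H.κ2 G v ⊗ₜ 1) by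
    rw [ΔR_eq_map_Δ, this, hH.counit_right]
  intro v
  induction v using TensorProduct.induction_on with
  | zero => simp
  | tmul u b =>
    have hb : H.βContract (H.Δ b) = H.ε b • H.β := hH.antipode_right b
    suffices H.pRMap ∘ₗ LinearMap.mulRight k (u ⊗ₜ H.Δ b) =
        LinearMap.mulRight k ((H.ε b • u) ⊗ₜ[k] (1 : G)) ∘ₗ H.pRMap by
      simpa [κ2] using LinearMap.congr_fun this t
    refine TensorProduct.ext_threefold' fun x y z => ?_
    simp only [LinearMap.comp_apply, LinearMap.mulRight_apply, hH.pRMap_tmul_mul_tmul, hb]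
    simp [Algebra.TensorProduct.tmul_mul_tmul, TensorProduct.smul_tmul']
  | add v₁ v₂ h₁ h₂ => simp only [map_add, mul_add, h₁, h₂, TensorProduct.add_tmul]

lemma qLMap_mul_tmul (t : G ⊗[k] (G ⊗[k] G)) (u : G) (w : G ⊗[k] G) :
    H.qLMap (t * (u ⊗ₜ w)) = (H.S u ⊗ₜ 1) * H.qLMap t * w := by
  suffices H.qLMap ∘ₗ LinearMap.mulRight k (u ⊗ₜ w) =
      LinearMap.mulRight k w ∘ₗ LinearMap.mulLeft k (H.S u ⊗ₜ[k] (1 : G)) ∘ₗ H.qLMap from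
    LinearMap.congr_fun this t
  refine TensorProduct.ext_threefold' fun x y z => ?_
  simp only [LinearMap.comp_apply, LinearMap.mulLeft_apply, LinearMap.mulRight_apply,
    Algebra.TensorProduct.tmul_mul_tmul, qLMap_tmul, hH.S_mul, ← mul_assoc, one_mul]

lemma qLMap_mul_ΔR {a : G} {κ : Type} [Fintype κ] {a1 a2 : κ → G}
    (hΔ : H.Δ a = ∑ m : κ, a1 m ⊗ₜ[k] a2 m) (t : G ⊗[k] (G ⊗[k] G)) :
    H.qLMap (t * H.ΔR a) = ∑ m : κ, (H.S (a1 m) ⊗ₜ 1) * H.qLMap t * H.Δ (a2 m) := by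
  simp only [ΔR_eq_sum hΔ, Finset.mul_sum, map_sum, hH.qLMap_mul_tmul]

lemma qLMap_assoc_tmul_mul (x y z c : G) (w : G ⊗[k] G) :
    H.qLMap (Algebra.TensorProduct.assoc k k k G G G (w ⊗ₜ c) * (x ⊗ₜ (y ⊗ₜ z))) =
      (H.S x * H.αContract w * y) ⊗ₜ (c * z) := by
  induction w using TensorProduct.induction_on with
  | zero => simp
  | tmul b₁ b₂ => simp [Algebra.TensorProduct.tmul_mul_tmul, hH.S_mul, mul_assoc]
  | add w₁ w₂ h₁ h₂ => simp only [TensorProduct.add_tmul, map_add, add_mul, mul_add, h₁, h₂]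

lemma qLMap_ΔL_mul (a : G) (t : G ⊗[k] (G ⊗[k] G)) :
    H.qLMap (H.ΔL a * t) = (1 ⊗ₜ a) * H.qLMap t := by
  suffices ∀ v : G ⊗[k] G, H.qLMap (Algebra.TensorProduct.assoc k k k G G G
      (Algebra.TensorProduct.map H.Δ (AlgHom.id k G) v) * t) = (1 ⊗ₜ H.κ1 G v) * H.qLMap t by
    rw [ΔL_eq_assoc_map_Δ, this, hH.counit_left]
  intro v
  induction v using TensorProduct.induction_on with
  | zero => simp
  | tmul b c =>
    have hb : H.αContract (H.Δ b) = H.ε b • H.α := hH.antipode_left b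
    suffices H.qLMap ∘ₗ LinearMap.mulLeft k (Algebra.TensorProduct.assoc k k k G G G
        (H.Δ b ⊗ₜ c)) = LinearMap.mulLeft k ((1 : G) ⊗ₜ[k] (H.ε b • c)) ∘ₗ H.qLMap by
      simpa [κ1] using LinearMap.congr_fun this t
    refine TensorProduct.ext_threefold' fun x y z => ?_
    simp [hH.qLMap_assoc_tmul_mul, hb, Algebra.TensorProduct.tmul_mul_tmul,
      TensorProduct.smul_tmul', mul_assoc]
  | add v₁ v₂ h₁ h₂ => simp only [map_add, add_mul, h₁, h₂, TensorProduct.tmul_add]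

lemma qRMap_mul_assoc_tmul (t : G ⊗[k] (G ⊗[k] G)) (w : G ⊗[k] G) (c : G) :
    H.qRMap (t * Algebra.TensorProduct.assoc k k k G G G (w ⊗ₜ c)) =
      (1 ⊗ₜ H.S.symm c) * H.qRMap t * w := by
  suffices H.qRMap ∘ₗ LinearMap.mulRight k (Algebra.TensorProduct.assoc k k k G G G (w ⊗ₜ c)) =
      LinearMap.mulRight k w ∘ₗ LinearMap.mulLeft k ((1 : G) ⊗ₜ[k] H.S.symm c) ∘ₗ H.qRMap from
    LinearMap.congr_fun this t
  refine TensorProduct.ext_threefold' fun x y z => ?_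
  have hxyz : x ⊗ₜ[k] (y ⊗ₜ[k] z) = Algebra.TensorProduct.assoc k k k G G G ((x ⊗ₜ y) ⊗ₜ z) :=
    rfl
  simp only [LinearMap.comp_apply, LinearMap.mulLeft_apply, LinearMap.mulRight_apply, hxyz,
    ← map_mul, Algebra.TensorProduct.tmul_mul_tmul, qRMap_assoc_tmul, ← mul_assoc,
    hH.S_symm_mul]
  simp [mul_assoc]

lemma qRMap_mul_ΔL {a : G} {κ : Type} [Fintype κ] {a1 a2 : κ → G}
    (hΔ : H.Δ a = ∑ m : κ, a1 m ⊗ₜ[k] a2 m) (t : G ⊗[k] (G ⊗[k] G)) :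
    H.qRMap (t * H.ΔL a) = ∑ m : κ, (1 ⊗ₜ H.S.symm (a2 m)) * H.qRMap t * H.Δ (a1 m) := by
  simp only [ΔL_eq_sum hΔ, Finset.mul_sum, map_sum, hH.qRMap_mul_assoc_tmul]

lemma qRMap_tmul_mul_tmul (u x y z : G) (w : G ⊗[k] G) :
    H.qRMap ((u ⊗ₜ w) * (x ⊗ₜ (y ⊗ₜ z))) =
      (u * x) ⊗ₜ (H.S.symm z * H.S.symm (H.αContract w) * y) := by
  induction w using TensorProduct.induction_on with
  | zero => simp
  | tmul b₁ b₂ => simp [Algebra.TensorProduct.tmul_mul_tmul, hH.S_symm_mul, mul_assoc]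
  | add w₁ w₂ h₁ h₂ => simp only [TensorProduct.tmul_add, map_add, add_mul, mul_add, h₁, h₂]

lemma qRMap_ΔR_mul (a : G) (t : G ⊗[k] (G ⊗[k] G)) :
    H.qRMap (H.ΔR a * t) = (a ⊗ₜ 1) * H.qRMap t := by
  suffices ∀ v : G ⊗[k] G, H.qRMap (Algebra.TensorProduct.map (AlgHom.id k G) H.Δ v * t) =
      (H.κ2 G v ⊗ₜ 1) * H.qRMap t by
    rw [ΔR_eq_map_Δ, this, hH.counit_right]
  intro v
  induction v using TensorProduct.induction_on with
  | zero => simp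
  | tmul u b =>
    have hb : H.αContract (H.Δ b) = H.ε b • H.α := hH.antipode_left b
    suffices H.qRMap ∘ₗ LinearMap.mulLeft k (u ⊗ₜ H.Δ b) =
        LinearMap.mulLeft k ((H.ε b • u) ⊗ₜ[k] (1 : G)) ∘ₗ H.qRMap by
      simpa [κ2] using LinearMap.congr_fun this t
    refine TensorProduct.ext_threefold' fun x y z => ?_
    simp only [LinearMap.comp_apply, LinearMap.mulLeft_apply, hH.qRMap_tmul_mul_tmul, hb]
    simp [Algebra.TensorProduct.tmul_mul_tmul, TensorProduct.smul_tmul', hH.S_symm_mul, mul_assoc]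
  | add v₁ v₂ h₁ h₂ => simp only [map_add, add_mul, h₁, h₂, TensorProduct.add_tmul]

end IsQuasiHopf

end QHA.QuasiHopfData

open QHA in
theorem statement5_general
    (k G : Type) [Field k] [Ring G] [Algebra k G]
    (H : QuasiHopfData k G) (hH : H.IsQuasiHopf)
    (ι ι' : Type) [Fintype ι] [Fintype ι']
    (X Y Z : ι → G) (P Q R₀ : ι' → G)
    (hφ : H.φ = ∑ i : ι, X i ⊗ₜ[k] (Y i ⊗ₜ[k] Z i))
    (hφ' : H.φ' = ∑ i : ι', P i ⊗ₜ[k] (Q i ⊗ₜ[k] R₀ i))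
    (pL pR qL qR : G ⊗[k] G)
    (hpL : pL = ∑ i : ι, (Y i * H.S.symm (X i * H.β)) ⊗ₜ[k] Z i)
    (hpR : pR = ∑ i : ι', P i ⊗ₜ[k] (Q i * H.β * H.S (R₀ i)))
    (hqL : qL = ∑ i : ι', (H.S (P i) * H.α * Q i) ⊗ₜ[k] R₀ i)
    (hqR : qR = ∑ i : ι, X i ⊗ₜ[k] (H.S.symm (H.α * Z i) * Y i)) :
    ∀ a : G, ∀ (κ : Type) [Fintype κ], ∀ a1 a2 : κ → G,
      H.Δ a = ∑ m : κ, a1 m ⊗ₜ[k] a2 m →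
      (∑ m : κ, H.Δ (a2 m) * pL * (H.S.symm (a1 m) ⊗ₜ[k] (1:G))
          = pL * ((1:G) ⊗ₜ[k] a)) ∧
      (∑ m : κ, H.Δ (a1 m) * pR * ((1:G) ⊗ₜ[k] H.S (a2 m))
          = pR * (a ⊗ₜ[k] (1:G))) ∧
      (∑ m : κ, (H.S (a1 m) ⊗ₜ[k] (1:G)) * qL * H.Δ (a2 m)
          = ((1:G) ⊗ₜ[k] a) * qL) ∧
      (∑ m : κ, ((1:G) ⊗ₜ[k] H.S.symm (a2 m)) * qR * H.Δ (a1 m)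
          = (a ⊗ₜ[k] (1:G)) * qR) := by
  intro a κ _ a1 a2 hΔ
  have hpL' : pL = H.pLMap H.φ := by
    simp [hpL, hφ, Algebra.TensorProduct.tmul_mul_tmul]
  have hpR' : pR = H.pRMap H.φ' := by simp [hpR, hφ']
  have hqL' : qL = H.qLMap H.φ' := by
    simp [hqL, hφ', Algebra.TensorProduct.tmul_mul_tmul]
  have hqR' : qR = H.qRMap H.φ := by simp [hqR, hφ]
  refine ⟨?_, ?_, ?_, ?_⟩
  · rw [hpL', ← hH.pLMap_ΔR_mul hΔ, hH.Δ_assoc, hH.pLMap_mul_ΔL]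
  · rw [hpR', ← hH.pRMap_ΔL_mul hΔ, hH.ΔL_mul_φ', hH.pRMap_mul_ΔR]
  · rw [hqL', ← hH.qLMap_mul_ΔR hΔ, ← hH.ΔL_mul_φ', hH.qLMap_ΔL_mul]
  · rw [hqR', ← hH.qRMap_mul_ΔL hΔ, ← hH.Δ_assoc, hH.qRMap_ΔR_mul]

open QHA in
/-- The commutation relations of `p_λ, p_ρ, q_λ, q_ρ` with the
coproduct (Eq. (2.26) of the paper), for all `a ∈ G`, in Sweedler notation. -/
theorem statement5
    (k G : Type) [Field k] [Ring G] [Algebra k G] [FiniteDimensional k G]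
    (H : QuasiHopfData k G) (hH : H.IsQuasiHopf)
    (ι ι' : Type) [Fintype ι] [Fintype ι']
    (X Y Z : ι → G) (P Q R₀ : ι' → G)
    (hφ : H.φ = ∑ i : ι, X i ⊗ₜ[k] (Y i ⊗ₜ[k] Z i))
    (hφ' : H.φ' = ∑ i : ι', P i ⊗ₜ[k] (Q i ⊗ₜ[k] R₀ i))
    (pL pR qL qR : G ⊗[k] G)
    (hpL : pL = ∑ i : ι, (Y i * H.S.symm (X i * H.β)) ⊗ₜ[k] Z i)
    (hpR : pR = ∑ i : ι', P i ⊗ₜ[k] (Q i * H.β * H.S (R₀ i)))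
    (hqL : qL = ∑ i : ι', (H.S (P i) * H.α * Q i) ⊗ₜ[k] R₀ i)
    (hqR : qR = ∑ i : ι, X i ⊗ₜ[k] (H.S.symm (H.α * Z i) * Y i)) :
    ∀ a : G, ∀ (κ : Type) [Fintype κ], ∀ a1 a2 : κ → G,
      H.Δ a = ∑ m : κ, a1 m ⊗ₜ[k] a2 m →
      (∑ m : κ, H.Δ (a2 m) * pL * (H.S.symm (a1 m) ⊗ₜ[k] (1:G))
          = pL * ((1:G) ⊗ₜ[k] a)) ∧
      (∑ m : κ, H.Δ (a1 m) * pR * ((1:G) ⊗ₜ[k] H.S (a2 m))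
          = pR * (a ⊗ₜ[k] (1:G))) ∧
      (∑ m : κ, (H.S (a1 m) ⊗ₜ[k] (1:G)) * qL * H.Δ (a2 m)
          = ((1:G) ⊗ₜ[k] a) * qL) ∧
      (∑ m : κ, ((1:G) ⊗ₜ[k] H.S.symm (a2 m)) * qR * H.Δ (a1 m)
          = (a ⊗ₜ[k] (1:G)) * qR) :=
  statement5_general k G H hH ι ι' X Y Z P Q R₀ hφ hφ' pL pR qL qR hpL hpR hqL hqR
end
end
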